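/- arXiv:1702.06457 — 10 statements merged into one kernel-verified Lean document; each statement's English description precedes it below -/
import Mathlib

section
/- Let H be a real Hilbert space, A ⊆ H a nonempty bounded set, L > 0, and f : H → ℝ a convex Fréchet-differentiable function whose gradient ∇f is L-Lipschitz. Let x⋆ ∈ conv(A) satisfy f(x⋆) ≤ f(w) for all w ∈ conv(A), and let δ ∈ (0,1]. Let (x_t)_{t≥0} be a sequence with x₀ ∈ conv(A) such that for every t ≥ 0 there is z_t ∈ A with ⟪∇f(x_t), z_t − x_t⟫ ≤ δ·inf_{z∈A} ⟪∇f(x_t), z − x_t⟫ (a δ-approximate Frank–Wolfe linear minimization oracle output), and x_{t+1} = x_t + γ_t (z_t − x_t) where γ_t ∈ [0,1] minimizes γ ↦ γ·⟪∇f(x_t), z_t − x_t⟫ + (γ²L/2)·‖z_t − x_t‖² over γ ∈ [0,1]. Then for every t ≥ 0, f(x_t) − f(x⋆) ≤ 2·((1/δ)·L·diam(A)² + ε₀)/(δ·t + 2), where ε₀ := f(x₀) − f(x⋆). -/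
/-!
Smoothness gives the descent inequality `f (x + γ d) ≤ f x + γ ⟪∇f x, d⟫ + γ² L / 2 ‖d‖²`, and
since `γₜ` minimizes its right-hand side over `[0, 1]`, the same bound holds with any `s ∈ [0, 1]`
in place of `γₜ`. Convexity bounds the Frank–Wolfe gap by the primal gap `hₜ = f xₜ - f x⋆`: the
infimum of the affine function `⟪∇f xₜ, · - xₜ⟫` over `A` is its infimum over `conv A`, hence at
most `⟪∇f xₜ, x⋆ - xₜ⟫ ≤ -hₜ`. So `hₜ₊₁ ≤ (1 - s δ) hₜ + s² L diam(A)² / 2` for all `s ∈ [0, 1]`,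
and the choice `s = 2 / (δ t + 2)` turns this recursion into the `O(1/t)` rate by induction.
-/

open scoped RealInnerProductSpace
open Set

lemma sublinear_rate_of_le_one_sub_mul_add_sq {h : ℕ → ℝ} {C δ : ℝ} (hδ : δ ∈ Ioc (0 : ℝ) 1)
    (hC : 0 ≤ C) (h0 : 0 ≤ h 0)
    (hrec : ∀ t, ∀ s ∈ Icc (0 : ℝ) 1, h (t + 1) ≤ (1 - s * δ) * h t + s ^ 2 * C / 2) (t : ℕ) :
    h t ≤ 2 * ((1 / δ) * C + h 0) / (δ * t + 2) := by
  obtain ⟨hδ0, hδ1⟩ := hδ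
  set M := (1 / δ) * C + h 0
  have hδM : C ≤ δ * M := by
    have : δ * M = C + δ * h 0 := by simp only [M]; field_simp
    nlinarith
  have hM : 0 ≤ M := by positivity
  induction t with
  | zero =>
    simp only [Nat.cast_zero, mul_zero, zero_add]
    linarith [show 0 ≤ 1 / δ * C by positivity]
  | succ n ih =>
    set a := δ * n + 2
    have ha : 2 ≤ a := by simp only [a]; nlinarith [(n.cast_nonneg : (0 : ℝ) ≤ n)]
    have hs : 2 / a ∈ Icc (0 : ℝ) 1 := ⟨by positivity, (div_le_one (by linarith)).2 ha⟩
    have hsδ : 0 ≤ 1 - 2 / a * δ := by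
      have : 2 / a * δ ≤ 2 / a := mul_le_of_le_one_right hs.1 hδ1
      linarith [hs.2]
    have ha' : δ * ((n + 1 : ℕ) : ℝ) + 2 = a + δ := by push_cast; ring
    calc h (n + 1) ≤ (1 - 2 / a * δ) * h n + (2 / a) ^ 2 * C / 2 := hrec n _ hs
      _ ≤ (1 - 2 / a * δ) * (2 * M / a) + (2 / a) ^ 2 * (δ * M) / 2 := by gcongr
      _ = 2 * M * (a - δ) / a ^ 2 := by field_simp; ring
      _ ≤ 2 * M / (a + δ) := by
        rw [div_le_div_iff₀ (by positivity) (by positivity)]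
        nlinarith [mul_nonneg hM (sq_nonneg δ)]
      _ = 2 * M / (δ * ((n + 1 : ℕ) : ℝ) + 2) := by rw [ha']

section Hilbert

variable {H : Type*} [NormedAddCommGroup H] [InnerProductSpace ℝ H]

lemma ConcaveOn.csInf_image_le_of_mem_convexHull {A : Set H} {ℓ : H → ℝ}
    (hℓ : ConcaveOn ℝ (convexHull ℝ A) ℓ) (hbdd : BddBelow (ℓ '' A)) {y : H}
    (hy : y ∈ convexHull ℝ A) : sInf (ℓ '' A) ≤ ℓ y := by
  obtain ⟨w, hwA, hwy⟩ := hℓ.exists_le_of_mem_convexHull (subset_convexHull ℝ A) hy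
  exact (csInf_le hbdd (mem_image_of_mem ℓ hwA)).trans hwy

lemma Bornology.IsBounded.bddBelow_image_inner_sub {A : Set H} (hA : Bornology.IsBounded A)
    (g x : H) : BddBelow ((fun w => ⟪g, w - x⟫) '' A) := by
  have hlip : LipschitzWith ‖g‖₊ fun w => ⟪g, w - x⟫ := .of_dist_le_mul fun a b => by
    simpa [dist_eq_norm, ← inner_sub_right] using abs_real_inner_le_norm g (a - b)
  exact (hlip.isBounded_image hA).bddBelow

lemma norm_sub_le_diam_of_mem_convexHull {A : Set H} (hA : Bornology.IsBounded A) {z y : H}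
    (hz : z ∈ A) (hy : y ∈ convexHull ℝ A) : ‖z - y‖ ≤ Metric.diam A := by
  rw [← dist_eq_norm, ← convexHull_diam]
  exact Metric.dist_le_diam_of_mem (isBounded_convexHull.2 hA) (subset_convexHull ℝ A hz) hy

variable [CompleteSpace H]

lemma HasGradientAt.hasDerivAt_comp_add_smul {f : H → ℝ} {g x v : H} {t : ℝ}
    (hf : HasGradientAt f g (x + t • v)) :
    HasDerivAt (fun s : ℝ => f (x + s • v)) ⟪g, v⟫ t := by
  have hline : HasDerivAt (fun s : ℝ => x + s • v) v t := by
    simpa using ((hasDerivAt_id t).smul_const v).const_add x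
  exact hf.hasFDerivAt.comp_hasDerivAt t hline

lemma ConvexOn.add_inner_sub_le_of_hasGradientAt {s : Set H} {f : H → ℝ} {g x y : H}
    (hf : ConvexOn ℝ s f) (hx : x ∈ s) (hy : y ∈ s) (hg : HasGradientAt f g x) :
    f x + ⟪g, y - x⟫ ≤ f y := by
  let ℓ : ℝ →ᵃ[ℝ] H := AffineMap.lineMap x y
  have hℓ0 : ℓ 0 = x := AffineMap.lineMap_apply_zero x y
  have hℓ1 : ℓ 1 = y := AffineMap.lineMap_apply_one x y
  have hderiv : HasDerivAt (f ∘ ℓ) ⟪g, y - x⟫ 0 :=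
    (hℓ0 ▸ hg).hasFDerivAt.comp_hasDerivAt 0 AffineMap.hasDerivAt_lineMap
  have hslope := (hf.comp_affineMap ℓ).le_slope_of_hasDerivAt (hℓ0 ▸ hx : ℓ 0 ∈ s)
    (hℓ1 ▸ hy : ℓ 1 ∈ s) zero_lt_one hderiv
  rw [slope_def_field, Function.comp_apply, Function.comp_apply, hℓ0, hℓ1] at hslope
  linarith

lemma apply_add_le_of_lipschitz_gradient {f : H → ℝ} {f' : H → H} {L : ℝ}
    (hf : ∀ w, HasGradientAt f (f' w) w) (hLip : ∀ u v, ‖f' u - f' v‖ ≤ L * ‖u - v‖) (x v : H) :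
    f (x + v) ≤ f x + ⟪f' x, v⟫ + L / 2 * ‖v‖ ^ 2 := by
  set φ : ℝ → ℝ := fun s => f (x + s • v) - s * ⟪f' x, v⟫ - L / 2 * s ^ 2 * ‖v‖ ^ 2
  have hφ : ∀ s, HasDerivAt φ (⟪f' (x + s • v), v⟫ - ⟪f' x, v⟫ - L * s * ‖v‖ ^ 2) s :=
    fun s => (((hf (x + s • v)).hasDerivAt_comp_add_smul.sub
      ((hasDerivAt_id s).mul_const ⟪f' x, v⟫)).sub
      (((hasDerivAt_pow 2 s).const_mul (L / 2)).mul_const (‖v‖ ^ 2))).congr_deriv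
        (by push_cast; ring)
  have hφ' : ∀ s ∈ interior (Ici (0 : ℝ)),
      ⟪f' (x + s • v), v⟫ - ⟪f' x, v⟫ - L * s * ‖v‖ ^ 2 ≤ 0 := by
    intro s hs
    have hs : 0 < s := by simpa using hs
    have hgrad : ‖f' (x + s • v) - f' x‖ ≤ L * (s * ‖v‖) := by
      simpa [norm_smul, abs_of_pos hs] using hLip (x + s • v) x
    have hinner : ⟪f' (x + s • v), v⟫ - ⟪f' x, v⟫ ≤ L * s * ‖v‖ ^ 2 :=
      calc ⟪f' (x + s • v), v⟫ - ⟪f' x, v⟫ = ⟪f' (x + s • v) - f' x, v⟫ :=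
            (inner_sub_left ..).symm
        _ ≤ ‖f' (x + s • v) - f' x‖ * ‖v‖ := real_inner_le_norm _ _
        _ ≤ L * (s * ‖v‖) * ‖v‖ := by gcongr
        _ = L * s * ‖v‖ ^ 2 := by ring
    linarith
  have hanti : AntitoneOn φ (Ici 0) := antitoneOn_of_hasDerivWithinAt_nonpos (convex_Ici 0)
    (fun s _ => (hφ s).continuousAt.continuousWithinAt) (fun s _ => (hφ s).hasDerivWithinAt) hφ'
  have hφ01 : φ 1 ≤ φ 0 := hanti self_mem_Ici (by norm_num : (1 : ℝ) ∈ Ici 0) zero_le_one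
  simp only [φ, one_smul, one_mul, one_pow, mul_one, zero_smul, add_zero, zero_mul, sub_zero,
    ne_eq, OfNat.ofNat_ne_zero, not_false_eq_true, zero_pow, mul_zero] at hφ01
  linarith

lemma inner_sub_le_mul_sub_of_approxLMO {A : Set H} (hA : Bornology.IsBounded A) {f : H → ℝ}
    (hf : ConvexOn ℝ univ f) {g x z xstar : H} (hg : HasGradientAt f g x)
    (hxstar : xstar ∈ convexHull ℝ A) {δ : ℝ} (hδ : 0 ≤ δ)
    (hz : ⟪g, z - x⟫ ≤ δ * sInf ((fun w => ⟪g, w - x⟫) '' A)) :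
    ⟪g, z - x⟫ ≤ δ * (f xstar - f x) := by
  have haffine : ConcaveOn ℝ (convexHull ℝ A) fun w => ⟪g, w - x⟫ := by
    have hw : (fun w => ⟪g, w - x⟫) = fun w => innerₛₗ ℝ g w + -⟪g, x⟫ := by
      ext w; simp [inner_sub_right, ← sub_eq_add_neg]
    rw [hw]
    exact ((innerₛₗ ℝ g).concaveOn (convex_convexHull ℝ A)).add_const _
  have hinf := haffine.csInf_image_le_of_mem_convexHull (hA.bddBelow_image_inner_sub g x) hxstar
  have hfirst := hf.add_inner_sub_le_of_hasGradientAt (mem_univ x) (mem_univ xstar) hg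
  calc ⟪g, z - x⟫ ≤ δ * sInf ((fun w => ⟪g, w - x⟫) '' A) := hz
    _ ≤ δ * (f xstar - f x) := by gcongr; linarith

lemma frankWolfe_step_le {f : H → ℝ} {f' : H → H} {L : ℝ} (hL : 0 ≤ L)
    (hf : ∀ w, HasGradientAt f (f' w) w) (hLip : ∀ u v, ‖f' u - f' v‖ ≤ L * ‖u - v‖)
    {x z xstar : H} {γ δ D : ℝ} (hgap : ⟪f' x, z - x⟫ ≤ δ * (f xstar - f x))
    (hD : ‖z - x‖ ≤ D)
    (hγ : ∀ s ∈ Icc (0 : ℝ) 1,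
      γ * ⟪f' x, z - x⟫ + γ ^ 2 * L / 2 * ‖z - x‖ ^ 2
        ≤ s * ⟪f' x, z - x⟫ + s ^ 2 * L / 2 * ‖z - x‖ ^ 2)
    {s : ℝ} (hs : s ∈ Icc (0 : ℝ) 1) :
    f (x + γ • (z - x)) - f xstar ≤ (1 - s * δ) * (f x - f xstar) + s ^ 2 * (L * D ^ 2) / 2 := by
  have hdescent := apply_add_le_of_lipschitz_gradient hf hLip x (γ • (z - x))
  rw [inner_smul_right, norm_smul, mul_pow, Real.norm_eq_abs, sq_abs] at hdescent
  have hsq : ‖z - x‖ ^ 2 ≤ D ^ 2 := pow_le_pow_left₀ (norm_nonneg _) hD 2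
  have hmodel : s * ⟪f' x, z - x⟫ + s ^ 2 * L / 2 * ‖z - x‖ ^ 2
      ≤ s * (δ * (f xstar - f x)) + s ^ 2 * L / 2 * D ^ 2 := by
    have hs0 : 0 ≤ s := hs.1
    gcongr
  linarith [hγ s hs]

end Hilbert

theorem frankWolfe_sublinear_convergence_general
    {H : Type*} [NormedAddCommGroup H] [InnerProductSpace ℝ H] [CompleteSpace H]
    (A : Set H) (hAbdd : Bornology.IsBounded A)
    (L : ℝ) (hL : 0 < L)
    (f : H → ℝ) (f' : H → H)
    (hconv : ConvexOn ℝ Set.univ f)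
    (hdiff : ∀ w : H, HasGradientAt f (f' w) w)
    (hLip : ∀ u v : H, ‖f' u - f' v‖ ≤ L * ‖u - v‖)
    (xstar : H) (hxstar : xstar ∈ convexHull ℝ A)
    (hmin : ∀ w ∈ convexHull ℝ A, f xstar ≤ f w)
    (δ : ℝ) (hδ : δ ∈ Set.Ioc (0:ℝ) 1)
    (x z : ℕ → H) (γ : ℕ → ℝ)
    (hx0 : x 0 ∈ convexHull ℝ A)
    (hzA : ∀ t, z t ∈ A)
    (hlmo : ∀ t, ⟪f' (x t), z t - x t⟫ ≤ δ * sInf ((fun w => ⟪f' (x t), w - x t⟫) '' A))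
    (hγmem : ∀ t, γ t ∈ Set.Icc (0:ℝ) 1)
    (hγmin : ∀ t, ∀ s ∈ Set.Icc (0:ℝ) 1,
        γ t * ⟪f' (x t), z t - x t⟫ + (γ t) ^ 2 * L / 2 * ‖z t - x t‖ ^ 2
          ≤ s * ⟪f' (x t), z t - x t⟫ + s ^ 2 * L / 2 * ‖z t - x t‖ ^ 2)
    (hupd : ∀ t, x (t + 1) = x t + γ t • (z t - x t)) :
    ∀ t : ℕ, f (x t) - f xstar ≤
      2 * ((1 / δ) * L * (Metric.diam A) ^ 2 + (f (x 0) - f xstar)) / (δ * t + 2) := by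
  have hmem : ∀ t, x t ∈ convexHull ℝ A := by
    intro t
    induction t with
    | zero => exact hx0
    | succ n ih =>
      rw [hupd n]
      exact (convex_convexHull ℝ A).add_smul_sub_mem ih (subset_convexHull ℝ A (hzA n)) (hγmem n)
  have hrec : ∀ t, ∀ s ∈ Icc (0 : ℝ) 1, f (x (t + 1)) - f xstar
      ≤ (1 - s * δ) * (f (x t) - f xstar) + s ^ 2 * (L * Metric.diam A ^ 2) / 2 := by
    intro t s hs
    rw [hupd t]
    exact frankWolfe_step_le hL.le hdiff hLip
      (inner_sub_le_mul_sub_of_approxLMO hAbdd hconv (hdiff _) hxstar hδ.1.le (hlmo t))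
      (norm_sub_le_diam_of_mem_convexHull hAbdd (hzA t) (hmem t)) (hγmin t) hs
  intro t
  simpa only [mul_assoc] using sublinear_rate_of_le_one_sub_mul_add_sq
    (h := fun t => f (x t) - f xstar) (C := L * Metric.diam A ^ 2) hδ (by positivity)
    (sub_nonneg.2 (hmin _ hx0)) hrec t

/-- Sublinear convergence of (norm-corrective / step-size-optimizing) Frank–Wolfe with a
δ-approximate linear minimization oracle (Theorem 1 / `thm:inexactFW`). -/
theorem frankWolfe_sublinear_convergence
    {H : Type*} [NormedAddCommGroup H] [InnerProductSpace ℝ H] [CompleteSpace H]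
    (A : Set H) (hA : A.Nonempty) (hAbdd : Bornology.IsBounded A)
    (L : ℝ) (hL : 0 < L)
    (f : H → ℝ) (f' : H → H)
    (hconv : ConvexOn ℝ Set.univ f)
    (hdiff : ∀ w : H, HasGradientAt f (f' w) w)
    (hLip : ∀ u v : H, ‖f' u - f' v‖ ≤ L * ‖u - v‖)
    (xstar : H) (hxstar : xstar ∈ convexHull ℝ A)
    (hmin : ∀ w ∈ convexHull ℝ A, f xstar ≤ f w)
    (δ : ℝ) (hδ : δ ∈ Set.Ioc (0:ℝ) 1)
    (x z : ℕ → H) (γ : ℕ → ℝ)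
    (hx0 : x 0 ∈ convexHull ℝ A)
    (hzA : ∀ t, z t ∈ A)
    (hlmo : ∀ t, ⟪f' (x t), z t - x t⟫ ≤ δ * sInf ((fun w => ⟪f' (x t), w - x t⟫) '' A))
    (hγmem : ∀ t, γ t ∈ Set.Icc (0:ℝ) 1)
    (hγmin : ∀ t, ∀ s ∈ Set.Icc (0:ℝ) 1,
        γ t * ⟪f' (x t), z t - x t⟫ + (γ t) ^ 2 * L / 2 * ‖z t - x t‖ ^ 2
          ≤ s * ⟪f' (x t), z t - x t⟫ + s ^ 2 * L / 2 * ‖z t - x t‖ ^ 2)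
    (hupd : ∀ t, x (t + 1) = x t + γ t • (z t - x t)) :
    ∀ t : ℕ, f (x t) - f xstar ≤
      2 * ((1 / δ) * L * (Metric.diam A) ^ 2 + (f (x 0) - f xstar)) / (δ * t + 2) :=
  frankWolfe_sublinear_convergence_general A hAbdd L hL f f' hconv hdiff hLip xstar hxstar hmin δ hδ
    x z γ hx0 hzA hlmo hγmem hγmin hupd
end

section
/- Let A ⊂ ℝ^d (with the standard Euclidean inner product) be a finite symmetric set (A = −A) containing a nonzero vector, let y ∈ ℝ^d, let f(x) := (1/2)‖y − x‖², and let δ ∈ (0,1]. Let x⋆ be the orthogonal projection of y onto span(A), i.e., the minimizer of f over span(A). Let (x_t)_{t≥0} be a sequence with x₀ ∈ span(A) such that for every t there is z_t ∈ A with ⟪∇f(x_t), z_t⟫ ≤ δ·inf_{z∈A} ⟪∇f(x_t), z⟫ (where ∇f(x) = x − y), and x_{t+1} = x_t + γ_t z_t with γ_t = ⟪y − x_t, z_t⟫/‖z_t‖² if z_t ≠ 0 and γ_t = 0 otherwise. Let ρ̃ > 0 satisfy ‖x⋆‖ ≤ ρ̃ and ‖x_t‖ ≤ ρ̃ for all t.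 Then for every t ≥ 0, f(x_t) − f(x⋆) ≤ 2·ρ̃²·diam(A)² / (δ²·inr(conv(A))²·(t + 2)). -/
open scoped RealInnerProductSpace Pointwise Classical

set_option maxHeartbeats 1000000

/-- The effective inradius of the convex hull of `A` within `span A`. -/
noncomputable def effInradius {d : ℕ} (A : Set (EuclideanSpace ℝ (Fin d))) : ℝ :=
  sSup {r : ℝ | 0 ≤ r ∧ ∃ c ∈ Submodule.span ℝ A,
    ∀ w ∈ Submodule.span ℝ A, ‖w - c‖ ≤ r → w ∈ convexHull ℝ A}

lemma exists_pos_inball {d : ℕ} (A : Set (EuclideanSpace ℝ (Fin d)))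
    (hA : A.Nonempty) (hsym : A = -A) :
    ∃ ε > (0:ℝ), ∃ c ∈ Submodule.span ℝ A,
      ∀ w ∈ Submodule.span ℝ A, ‖w - c‖ ≤ ε → w ∈ convexHull ℝ A := by
  classical
  set K := Submodule.span ℝ A with hK
  set A' : Set K := (Subtype.val ⁻¹' A) with hA'
  have himg : Subtype.val '' A' = A := by
    ext a
    constructor
    · rintro ⟨a', ha', rfl⟩; exact ha'
    · intro ha; exact ⟨⟨a, Submodule.subset_span ha⟩, ha, rfl⟩
  have hA'ne : A'.Nonempty := by
    obtain ⟨a, ha⟩ := hA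
    exact ⟨⟨a, Submodule.subset_span ha⟩, ha⟩
  have himg' : (⇑K.subtype) '' A' = A := himg
  have hspanA' : Submodule.span ℝ A' = ⊤ := by
    apply Submodule.map_injective_of_injective (Submodule.injective_subtype K)
    rw [Submodule.map_span, himg', Submodule.map_subtype_top]
  have hvec : vectorSpan ℝ A' = ⊤ := by
    rw [eq_top_iff, ← hspanA']
    rw [Submodule.span_le]
    intro a' ha'
    have hneg : -a' ∈ A' := by
      have : -(a' : EuclideanSpace ℝ (Fin d)) ∈ A := by
        rw [hsym]; exact Set.neg_mem_neg.mpr ha'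
      exact this
    have hdiff : a' -ᵥ (-a') ∈ vectorSpan ℝ A' := vsub_mem_vectorSpan ℝ ha' hneg
    have he : a' = (2⁻¹ : ℝ) • (a' -ᵥ (-a')) := by
      simp [vsub_eq_sub, sub_neg_eq_add]
      module
    rw [he]
    exact Submodule.smul_mem _ _ hdiff
  have haff : affineSpan ℝ (convexHull ℝ A') = ⊤ := by
    rw [affineSpan_convexHull]
    rw [AffineSubspace.affineSpan_eq_top_iff_vectorSpan_eq_top_of_nonempty ℝ K K hA'ne]
    exact hvec
  have hint : (interior (convexHull ℝ A')).Nonempty :=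
    ((convex_convexHull ℝ A').interior_nonempty_iff_affineSpan_eq_top).mpr haff
  obtain ⟨c, hc⟩ := hint
  obtain ⟨ε, hε, hball⟩ := Metric.mem_nhds_iff.mp (mem_interior_iff_mem_nhds.mp hc)
  refine ⟨ε/2, by linarith, c, c.2, ?_⟩
  intro w hw hwc
  have hmem : (⟨w, hw⟩ : K) ∈ convexHull ℝ A' := by
    apply hball
    rw [Metric.mem_ball]
    have hd : dist (⟨w, hw⟩ : K) c = ‖w - (c : EuclideanSpace ℝ (Fin d))‖ := by
      rw [Subtype.dist_eq, dist_eq_norm]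
    rw [hd]; linarith
  have h2 := Set.mem_image_of_mem (K.subtype) hmem
  rw [K.subtype.image_convexHull, himg'] at h2
  exact h2

/-- Sublinear convergence of Generalized Matching Pursuit for the least-squares objective,
with iterate-independent constants in terms of the effective inradius
(Corollary 1 / `cor:sublinleastsq`). -/
theorem matchingPursuit_leastSquares_sublinear_inradius
    {d : ℕ} (A : Set (EuclideanSpace ℝ (Fin d)))
    (hAfin : A.Finite) (hA : A.Nonempty) (hsym : A = -A)
    (hnz : ∃ a ∈ A, a ≠ 0)
    (y : EuclideanSpace ℝ (Fin d))
    (f : EuclideanSpace ℝ (Fin d) → ℝ) (hf : ∀ w, f w = (1 / 2) * ‖y - w‖ ^ 2)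
    (δ : ℝ) (hδ : δ ∈ Set.Ioc (0:ℝ) 1)
    (xstar : EuclideanSpace ℝ (Fin d))
    (hxstar : xstar ∈ Submodule.span ℝ A)
    (hmin : ∀ w ∈ Submodule.span ℝ A, f xstar ≤ f w)
    (x z : ℕ → EuclideanSpace ℝ (Fin d))
    (hx0 : x 0 ∈ Submodule.span ℝ A)
    (hzA : ∀ t, z t ∈ A)
    (hlmo : ∀ t, ⟪x t - y, z t⟫ ≤ δ * sInf ((fun w => ⟪x t - y, w⟫) '' A))
    (hupd : ∀ t, x (t + 1) =
        x t + (if z t = 0 then (0:ℝ) else ⟪y - x t, z t⟫ / ‖z t‖ ^ 2) • z t)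
    (ρ' : ℝ) (hρ' : 0 < ρ') (hρstar : ‖xstar‖ ≤ ρ') (hρt : ∀ t, ‖x t‖ ≤ ρ') :
    ∀ t : ℕ, f (x t) - f xstar ≤
      2 * ρ' ^ 2 * (Metric.diam A) ^ 2 / (δ ^ 2 * (effInradius A) ^ 2 * (t + 2)) := by
  classical
  obtain ⟨hδpos, hδle⟩ := hδ
  set K := Submodule.span ℝ A with hKdef
  set D := Metric.diam A with hDdef
  have hbdd : Bornology.IsBounded A := hAfin.isBounded
  have hbddc : Bornology.IsBounded (convexHull ℝ A) := isBounded_convexHull.mpr hbdd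
  -- D is positive
  obtain ⟨a₀, ha₀A, ha₀ne⟩ := hnz
  have ha₀n : -a₀ ∈ A := by rw [hsym]; exact Set.neg_mem_neg.mpr ha₀A
  have hDpos : 0 < D := by
    have h1 : dist a₀ (-a₀) ≤ D := Metric.dist_le_diam_of_mem hbdd ha₀A ha₀n
    have h2 : dist a₀ (-a₀) = 2 * ‖a₀‖ := by
      rw [dist_eq_norm, sub_neg_eq_add, ← two_smul ℝ a₀, norm_smul]
      simp
    have := norm_pos_iff.mpr ha₀ne
    linarith
  -- iterates stay in the span
  have hspan : ∀ t, x t ∈ K := by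
    intro t
    induction t with
    | zero => exact hx0
    | succ n ih =>
      rw [hupd n]
      exact K.add_mem ih (K.smul_mem _ (Submodule.subset_span (hzA n)))
  -- orthogonality of the residual at xstar
  have horth : ∀ v ∈ K, ⟪y - xstar, v⟫ = 0 := by
    intro v hv
    by_cases hv0 : v = 0
    · simp [hv0]
    have hnv : (0:ℝ) < ‖v‖ ^ 2 := by
      have := norm_pos_iff.mpr hv0; positivity
    set s : ℝ := ⟪y - xstar, v⟫ / ‖v‖ ^ 2 with hs
    have hmem : xstar + s • v ∈ K := K.add_mem hxstar (K.smul_mem _ hv)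
    have h1 := hmin _ hmem
    have h2 : y - (xstar + s • v) = (y - xstar) - s • v := by module
    have hexp : ‖(y - xstar) - s • v‖^2
        = ‖y - xstar‖^2 - 2*(s*⟪y - xstar, v⟫) + s^2*‖v‖^2 := by
      rw [norm_sub_sq_real (y - xstar) (s • v), real_inner_smul_right, norm_smul,
        mul_pow, Real.norm_eq_abs, sq_abs]
    rw [hf, hf, h2, hexp] at h1
    have hsN : s * ‖v‖^2 = ⟪y - xstar, v⟫ := by
      rw [hs]; field_simp
    have hI2 : ⟪y - xstar, v⟫ ^ 2 ≤ 0 := by nlinarith [h1, hsN, hnv]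
    have := le_antisymm hI2 (sq_nonneg _)
    exact pow_eq_zero_iff (two_ne_zero).symm.symm |>.mp this
  -- the gap identity
  have hgap : ∀ w ∈ K, f w - f xstar = 1/2 * ‖w - xstar‖ ^ 2 := by
    intro w hw
    have h1 : y - w = (y - xstar) - (w - xstar) := by module
    rw [hf, hf, h1, norm_sub_sq_real, horth _ (K.sub_mem hw hxstar)]
    ring
  set h : ℕ → ℝ := fun t => f (x t) - f xstar with hh
  have hval : ∀ t, h t = 1/2 * ‖x t - xstar‖ ^ 2 := fun t => hgap _ (hspan t)
  have hnn : ∀ t, 0 ≤ h t := by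
    intro t; rw [hval t]; positivity
  set M : ℝ := 2 * ρ' ^ 2 with hM
  have hMpos : 0 < M := by positivity
  have h0le : h 0 ≤ M := by
    rw [hval 0, hM]
    have : ‖x 0 - xstar‖ ≤ 2 * ρ' := by
      calc ‖x 0 - xstar‖ ≤ ‖x 0‖ + ‖xstar‖ := norm_sub_le _ _
      _ ≤ 2 * ρ' := by linarith [hρt 0]
    nlinarith [norm_nonneg (x 0 - xstar)]
  -- ball property (centered at the origin)
  have hcenter : ∀ r : ℝ, 0 ≤ r →
      (∃ c ∈ K, ∀ w ∈ K, ‖w - c‖ ≤ r → w ∈ convexHull ℝ A) →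
      ∀ w ∈ K, ‖w‖ ≤ r → w ∈ convexHull ℝ A := by
    rintro r hr ⟨c, hcK, hc⟩ w hw hwr
    have h1 : w + c ∈ convexHull ℝ A := by
      apply hc _ (K.add_mem hw hcK); simpa using hwr
    have h2 : c - w ∈ convexHull ℝ A := by
      apply hc _ (K.sub_mem hcK hw)
      rw [show c - w - c = -w by module, norm_neg]; exact hwr
    have h3 : w - c ∈ convexHull ℝ A := by
      have : -(c - w) ∈ -convexHull ℝ A := Set.neg_mem_neg.mpr h2
      rw [← convexHull_neg, ← hsym] at this
      simpa [neg_sub] using this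
    have := (convex_convexHull ℝ A) h1 h3 (by norm_num : (0:ℝ) ≤ 1/2)
      (by norm_num : (0:ℝ) ≤ 1/2) (by norm_num)
    rwa [show (1/2 : ℝ) • (w + c) + (1/2 : ℝ) • (w - c) = w by module] at this
  -- key inner-product bound
  have hkey : ∀ r : ℝ, 0 ≤ r →
      (∀ w ∈ K, ‖w‖ ≤ r → w ∈ convexHull ℝ A) →
      ∀ t, δ * r * ‖x t - xstar‖ ≤ ⟪y - x t, z t⟫ := by
    intro r hr hball t
    have hflip : ⟪y - x t, z t⟫ = - ⟪x t - y, z t⟫ := by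
      rw [show y - x t = -(x t - y) by module, inner_neg_left]
    by_cases hxx : x t = xstar
    · rw [hflip, hxx]
      rw [show xstar - y = -(y - xstar) by module, inner_neg_left,
        horth _ (Submodule.subset_span (hzA t))]
      simp
    -- the unit direction
    have hvne : x t - xstar ≠ 0 := sub_ne_zero_of_ne hxx
    have hvpos : 0 < ‖x t - xstar‖ := norm_pos_iff.mpr hvne
    set u := (‖x t - xstar‖)⁻¹ • (xstar - x t) with hu
    have huK : u ∈ K := K.smul_mem _ (K.sub_mem hxstar (hspan t))
    have hun : ‖u‖ = 1 := by
      rw [hu, norm_smul, norm_inv, norm_norm, norm_sub_rev xstar (x t),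
        inv_mul_cancel₀ (ne_of_gt hvpos)]
    have hru : r • u ∈ convexHull ℝ A := by
      apply hball _ (K.smul_mem _ huK)
      rw [norm_smul, hun, mul_one, Real.norm_eq_abs, abs_of_nonneg hr]
    -- halfspace argument
    set T := (fun w => ⟪x t - y, w⟫) '' A with hT
    have hTbdd : BddBelow T := (hAfin.image _).bddBelow
    have hhalf : convexHull ℝ A ⊆ {w | sInf T ≤ ⟪x t - y, w⟫} := by
      apply convexHull_min
      · intro a ha
        exact csInf_le hTbdd (Set.mem_image_of_mem _ ha)
      · exact convex_halfSpace_ge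
          ⟨fun a b => inner_add_right _ _ _, fun c a => real_inner_smul_right _ _ _⟩ _
    have h1 : sInf T ≤ ⟪x t - y, r • u⟫ := hhalf hru
    have h2 : ⟪x t - y, u⟫ = -‖x t - xstar‖ := by
      have hsplit : ⟪x t - y, u⟫ = ⟪x t - xstar, u⟫ + ⟪xstar - y, u⟫ := by
        rw [← inner_add_left]
        congr 1
        module
      have hz2 : ⟪xstar - y, u⟫ = 0 := by
        rw [show xstar - y = -(y - xstar) by module, inner_neg_left, horth _ huK]
        simp
      rw [hsplit, hz2, add_zero, hu, real_inner_smul_right,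
        show xstar - x t = -(x t - xstar) by module, inner_neg_right,
        real_inner_self_eq_norm_sq]
      field_simp
    rw [real_inner_smul_right, h2] at h1
    have h3 := (hlmo t).trans (mul_le_mul_of_nonneg_left h1 (le_of_lt hδpos))
    rw [hflip]
    nlinarith [h3]
  -- per-step decay
  have hstep : ∀ r : ℝ, 0 < r →
      (∀ w ∈ K, ‖w‖ ≤ r → w ∈ convexHull ℝ A) →
      ∀ t, h (t + 1) ≤ (1 - δ^2 * r^2 / D^2) * h t := by
    intro r hr hball t
    have hin := hkey r (le_of_lt hr) hball t
    by_cases hz0 : z t = 0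
    · have hzero : ‖x t - xstar‖ = 0 := by
        rw [hz0] at hin
        simp only [inner_zero_right] at hin
        nlinarith [norm_nonneg (x t - xstar), mul_pos hδpos hr]
      have hteq : h t = 0 := by rw [hval t, hzero]; ring
      have hx1 : x (t+1) = x t := by rw [hupd t, if_pos hz0]; simp
      have ht1 : h (t+1) = 0 := by
        rw [hval (t+1), hx1, hzero]; ring
      rw [ht1, hteq, mul_zero]
    · have hζn : (0:ℝ) < ‖z t‖^2 := by
        have := norm_pos_iff.mpr hz0; positivity
      have hζne : ‖z t‖^2 ≠ 0 := ne_of_gt hζn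
      have hx1 : x (t+1) = x t + (⟪y - x t, z t⟫ / ‖z t‖^2) • (z t) := by
        rw [hupd t, if_neg hz0]
      have hyx : y - x (t+1) = (y - x t) - (⟪y - x t, z t⟫ / ‖z t‖^2) • (z t) := by
        rw [hx1]; module
      have hfval : f (x (t+1)) = f (x t) - ⟪y - x t, z t⟫^2 / (2 * ‖z t‖^2) := by
        rw [hf, hf, hyx, norm_sub_sq_real, real_inner_smul_right, norm_smul,
          mul_pow, Real.norm_eq_abs, sq_abs]
        field_simp
        ring
      have hfval' : h (t+1) = h t - ⟪y - x t, z t⟫^2 / (2 * ‖z t‖^2) := by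
        simp only [hh]
        rw [hfval]; ring
      -- bound on the norm of z t
      have hζD : ‖z t‖ ≤ D := by
        have h1 : dist (z t) (-(z t)) ≤ D := Metric.dist_le_diam_of_mem hbdd (hzA t)
          (by rw [hsym]; exact Set.neg_mem_neg.mpr (hzA t))
        have h2 : dist (z t) (-(z t)) = 2 * ‖z t‖ := by
          rw [dist_eq_norm, sub_neg_eq_add, ← two_smul ℝ (z t), norm_smul]; simp
        linarith [norm_nonneg (z t)]
      have hin0 : 0 ≤ ⟪y - x t, z t⟫ :=
        le_trans (mul_nonneg (mul_nonneg hδpos.le hr.le) (norm_nonneg _)) hin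
      have hsq : δ^2 * r^2 * ‖x t - xstar‖^2 ≤ ⟪y - x t, z t⟫^2 := by
        have h0 : 0 ≤ δ * r * ‖x t - xstar‖ :=
          mul_nonneg (mul_nonneg hδpos.le hr.le) (norm_nonneg _)
        have := pow_le_pow_left₀ h0 hin 2
        calc δ^2 * r^2 * ‖x t - xstar‖^2 = (δ * r * ‖x t - xstar‖)^2 := by ring
        _ ≤ ⟪y - x t, z t⟫^2 := this
      have hnormsq : ‖x t - xstar‖^2 = 2 * h t := by rw [hval t]; ring
      have hζD2 : ‖z t‖^2 ≤ D^2 := by nlinarith [norm_nonneg (z t)]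
      have hfrac : δ^2 * r^2 * h t / D^2 ≤ ⟪y - x t, z t⟫^2 / (2 * ‖z t‖^2) := by
        rw [div_le_div_iff₀ (by positivity) (by positivity)]
        have e1 : δ^2 * r^2 * h t * (2 * ‖z t‖^2)
            = (δ^2 * r^2 * ‖x t - xstar‖^2) * ‖z t‖^2 := by rw [hnormsq]; ring
        have e2 : (δ^2 * r^2 * ‖x t - xstar‖^2) * ‖z t‖^2
            ≤ ⟪y - x t, z t⟫^2 * ‖z t‖^2 :=
          mul_le_mul_of_nonneg_right hsq (sq_nonneg _)
        have e3 : ⟪y - x t, z t⟫^2 * ‖z t‖^2 ≤ ⟪y - x t, z t⟫^2 * D^2 :=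
          mul_le_mul_of_nonneg_left hζD2 (sq_nonneg _)
        linarith
      rw [hfval']
      have hrw : (1 - δ^2 * r^2 / D^2) * h t = h t - δ^2 * r^2 * h t / D^2 := by
        ring
      linarith [hfrac]
  -- linear decay bound
  have hdecay : ∀ r : ℝ, 0 < r →
      (∀ w ∈ K, ‖w‖ ≤ r → w ∈ convexHull ℝ A) →
      ∀ t, h t ≤ M * (1 - δ^2 * r^2 / D^2)^t := by
    intro r hr hball
    -- r ≤ D / 2
    have hrD : r ≤ D / 2 := by
      set u₀ := (‖a₀‖)⁻¹ • a₀ with hu₀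
      have hu₀K : u₀ ∈ K := K.smul_mem _ (Submodule.subset_span ha₀A)
      have hu₀n : ‖u₀‖ = 1 := by
        rw [hu₀, norm_smul, norm_inv, norm_norm,
          inv_mul_cancel₀ (ne_of_gt (norm_pos_iff.mpr ha₀ne))]
      have h1 : r • u₀ ∈ convexHull ℝ A := by
        apply hball _ (K.smul_mem _ hu₀K)
        rw [norm_smul, hu₀n, mul_one, Real.norm_eq_abs, abs_of_nonneg hr.le]
      have h2 : -(r • u₀) ∈ convexHull ℝ A := by
        have := Set.neg_mem_neg.mpr h1
        rwa [← convexHull_neg, ← hsym] at this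
      have h3 : dist (r • u₀) (-(r • u₀)) ≤ Metric.diam (convexHull ℝ A) :=
        Metric.dist_le_diam_of_mem hbddc h1 h2
      rw [convexHull_diam, dist_eq_norm, sub_neg_eq_add, ← two_smul ℝ, norm_smul,
        norm_smul, hu₀n] at h3
      simp only [mul_one, Real.norm_eq_abs] at h3
      rw [abs_of_pos hr, show |(2:ℝ)| = 2 by norm_num] at h3
      linarith
    set q : ℝ := δ^2 * r^2 / D^2 with hq
    have hqpos : 0 < q := by positivity
    have hqle : q ≤ 1/4 := by
      rw [hq, div_le_iff₀ (by positivity)]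
      have e1 : δ^2 ≤ 1 := by nlinarith
      have e2 : r^2 ≤ (D/2)^2 := by nlinarith [hrD, hr.le, hDpos.le]
      calc δ^2 * r^2 ≤ 1 * r^2 := mul_le_mul_of_nonneg_right e1 (sq_nonneg r)
      _ = r^2 := one_mul _
      _ ≤ (D/2)^2 := e2
      _ = 1/4 * D^2 := by ring
    intro t
    induction t with
    | zero => simpa using h0le
    | succ n ih =>
      calc h (n+1) ≤ (1 - q) * h n := hstep r hr hball n
      _ ≤ (1 - q) * (M * (1 - q)^n) := by
          apply mul_le_mul_of_nonneg_left ih; linarith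
      _ = M * (1 - q)^(n+1) := by ring
  -- the per-radius product bound
  have hprod : ∀ t : ℕ, ∀ r : ℝ, 0 ≤ r →
      (∃ c ∈ K, ∀ w ∈ K, ‖w - c‖ ≤ r → w ∈ convexHull ℝ A) →
      h t * (δ^2 * r^2 * (t + 2)) ≤ M * D^2 := by
    intro t r hr hcr
    rcases eq_or_lt_of_le hr with hr0 | hrpos
    · have hz : δ^2 * (0:ℝ)^2 * ((t:ℝ)+2) = 0 := by ring
      rw [← hr0, hz, mul_zero]
      positivity
    have hball := hcenter r hr hcr
    set q : ℝ := δ^2 * r^2 / D^2 with hq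
    have hqpos : 0 < q := by positivity
    have hrD : r ≤ D / 2 := by
      -- repeat of argument above, extract q ≤ 1/4 differently: use hdecay only
      set u₀ := (‖a₀‖)⁻¹ • a₀ with hu₀
      have hu₀K : u₀ ∈ K := K.smul_mem _ (Submodule.subset_span ha₀A)
      have hu₀n : ‖u₀‖ = 1 := by
        rw [hu₀, norm_smul, norm_inv, norm_norm,
          inv_mul_cancel₀ (ne_of_gt (norm_pos_iff.mpr ha₀ne))]
      have h1 : r • u₀ ∈ convexHull ℝ A := by
        apply hball _ (K.smul_mem _ hu₀K)
        rw [norm_smul, hu₀n, mul_one, Real.norm_eq_abs, abs_of_nonneg hr]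
      have h2 : -(r • u₀) ∈ convexHull ℝ A := by
        have := Set.neg_mem_neg.mpr h1
        rwa [← convexHull_neg, ← hsym] at this
      have h3 : dist (r • u₀) (-(r • u₀)) ≤ Metric.diam (convexHull ℝ A) :=
        Metric.dist_le_diam_of_mem hbddc h1 h2
      rw [convexHull_diam, dist_eq_norm, sub_neg_eq_add, ← two_smul ℝ, norm_smul,
        norm_smul, hu₀n] at h3
      simp only [mul_one, Real.norm_eq_abs] at h3
      rw [abs_of_pos hrpos, show |(2:ℝ)| = 2 by norm_num] at h3
      linarith
    have hqle : q ≤ 1/4 := by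
      rw [hq, div_le_iff₀ (by positivity)]
      have e1 : δ^2 ≤ 1 := by nlinarith
      have e2 : r^2 ≤ (D/2)^2 := by nlinarith [hrD, hrpos.le, hDpos.le]
      calc δ^2 * r^2 ≤ 1 * r^2 := mul_le_mul_of_nonneg_right e1 (sq_nonneg r)
      _ = r^2 := one_mul _
      _ ≤ (D/2)^2 := e2
      _ = 1/4 * D^2 := by ring
    have hdec := hdecay r hrpos hball t
    -- Bernoulli-type bound : (1-q)^t * (q * (t+2)) ≤ 1
    have hbern : (1 - q)^t * (q * (t + 2)) ≤ 1 := by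
      have hber : 1 + (t:ℝ) * q ≤ (1 + q)^t := one_add_mul_le_pow (by linarith) t
      have hpow1 : (1 - q)^t * (1 + q)^t ≤ 1 := by
        rw [← mul_pow]
        apply pow_le_one₀ (by nlinarith) (by nlinarith)
      have hpnn : (0:ℝ) ≤ (1 - q)^t := by
        apply pow_nonneg; linarith
      have h5 : (1 - q)^t * (1 + (t:ℝ) * q) ≤ 1 :=
        le_trans (mul_le_mul_of_nonneg_left hber hpnn) hpow1
      have h6 : q * ((t:ℝ) + 2) ≤ 1 + (t:ℝ) * q := by
        have : (0:ℝ) ≤ (t:ℝ) := Nat.cast_nonneg t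
        nlinarith
      calc (1 - q)^t * (q * (t + 2)) ≤ (1 - q)^t * (1 + (t:ℝ) * q) :=
            mul_le_mul_of_nonneg_left h6 hpnn
      _ ≤ 1 := h5
    -- combine
    have h7 : h t * (q * (t + 2)) ≤ M := by
      calc h t * (q * (t + 2)) ≤ (M * (1 - q)^t) * (q * (t + 2)) := by
            apply mul_le_mul_of_nonneg_right hdec
            positivity
      _ = M * ((1 - q)^t * (q * (t + 2))) := by ring
      _ ≤ M * 1 := mul_le_mul_of_nonneg_left hbern hMpos.le
      _ = M := mul_one M
    have h8 : h t * (q * (t + 2)) * D^2 ≤ M * D^2 :=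
      mul_le_mul_of_nonneg_right h7 (by positivity)
    calc h t * (δ^2 * r^2 * (t + 2)) = h t * (q * (t + 2)) * D^2 := by
          rw [hq]; field_simp
    _ ≤ M * D^2 := h8
  -- the admissible-radius set
  set S := {r : ℝ | 0 ≤ r ∧ ∃ c ∈ Submodule.span ℝ A,
    ∀ w ∈ Submodule.span ℝ A, ‖w - c‖ ≤ r → w ∈ convexHull ℝ A} with hSdef
  have hS0 : (0:ℝ) ∈ S := by
    refine ⟨le_refl 0, a₀, Submodule.subset_span ha₀A, ?_⟩
    intro w hw hwa
    have h0 : w - a₀ = 0 := norm_eq_zero.mp (le_antisymm hwa (norm_nonneg _))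
    rw [sub_eq_zero.mp h0]
    exact subset_convexHull ℝ A ha₀A
  have hSbdd : BddAbove S := by
    refine ⟨D, ?_⟩
    rintro r ⟨hr, c, hcK, hc⟩
    set u₀ := (‖a₀‖)⁻¹ • a₀ with hu₀
    have hu₀K : u₀ ∈ K := K.smul_mem _ (Submodule.subset_span ha₀A)
    have hu₀n : ‖u₀‖ = 1 := by
      rw [hu₀, norm_smul, norm_inv, norm_norm,
        inv_mul_cancel₀ (ne_of_gt (norm_pos_iff.mpr ha₀ne))]
    have h1 : c + r • u₀ ∈ convexHull ℝ A := by
      apply hc _ (K.add_mem hcK (K.smul_mem _ hu₀K))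
      rw [show c + r • u₀ - c = r • u₀ by module, norm_smul, hu₀n, mul_one,
        Real.norm_eq_abs, abs_of_nonneg hr]
    have h2 : c ∈ convexHull ℝ A := by
      apply hc _ hcK; simpa using hr
    have h3 : dist (c + r • u₀) c ≤ Metric.diam (convexHull ℝ A) :=
      Metric.dist_le_diam_of_mem hbddc h1 h2
    rw [convexHull_diam, dist_eq_norm, show c + r • u₀ - c = r • u₀ by module,
      norm_smul, hu₀n, mul_one, Real.norm_eq_abs, abs_of_nonneg hr] at h3
    exact h3
  have hSne : S.Nonempty := ⟨0, hS0⟩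
  set R := effInradius A with hR
  have hRS : R = sSup S := rfl
  have hRpos : 0 < R := by
    obtain ⟨ε, hεpos, hc⟩ := exists_pos_inball A hA hsym
    have hεS : ε ∈ S := ⟨le_of_lt hεpos, hc⟩
    have h1 : ε ≤ sSup S := le_csSup hSbdd hεS
    rw [hRS]
    linarith
  intro t
  -- product bound at the supremum
  have hfinal : h t * (δ^2 * R^2 * (t + 2)) ≤ M * D^2 := by
    by_cases hht : h t = 0
    · rw [hht, zero_mul]; positivity
    have hhtpos : 0 < h t := lt_of_le_of_ne (hnn t) (Ne.symm hht)
    set a : ℝ := h t * (δ^2 * (t + 2)) with ha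
    have hapos : 0 < a := by positivity
    by_contra hcon
    push_neg at hcon
    have hcon' : M * D^2 < a * R^2 := by
      calc M * D^2 < h t * (δ^2 * R^2 * (t + 2)) := hcon
      _ = a * R^2 := by rw [ha]; ring
    set r₀ : ℝ := Real.sqrt (M * D^2 / a) with hr₀
    have hr₀nn : 0 ≤ r₀ := Real.sqrt_nonneg _
    have hr₀sq : r₀^2 = M * D^2 / a := Real.sq_sqrt (by positivity)
    have hr₀R : r₀ < R := by
      by_contra hge
      push_neg at hge
      have : R^2 ≤ r₀^2 := by nlinarith [hRpos.le]
      rw [hr₀sq] at this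
      rw [le_div_iff₀ hapos] at this
      nlinarith
    obtain ⟨r, hrS, hr₀r⟩ := exists_lt_of_lt_csSup hSne (hRS ▸ hr₀R)
    obtain ⟨hrnn, hcr⟩ := hrS
    have hb := hprod t r hrnn hcr
    have : a * r₀^2 < a * r^2 := by
      apply mul_lt_mul_of_pos_left _ hapos
      nlinarith
    rw [hr₀sq, mul_div_cancel₀ _ (ne_of_gt hapos)] at this
    have : M * D^2 < h t * (δ^2 * r^2 * (t + 2)) := by
      calc M * D^2 < a * r^2 := this
      _ = h t * (δ^2 * r^2 * (t + 2)) := by rw [ha]; ring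
    linarith
  -- conclude
  have hden : 0 < δ^2 * R^2 * ((t:ℝ) + 2) := by positivity
  show h t ≤ 2 * ρ' ^ 2 * D ^ 2 / (δ ^ 2 * R ^ 2 * ((t:ℝ) + 2))
  rw [le_div_iff₀ hden]
  calc h t * (δ ^ 2 * R ^ 2 * ((t:ℝ) + 2)) ≤ M * D^2 := hfinal
  _ = 2 * ρ' ^ 2 * D ^ 2 := by rw [hM]
end

section
/- Let H be a real Hilbert space and A ⊆ H a nonempty bounded set with mDW(A) > 0 and 0 < radius(A) < ∞, where radius(A) := sup_{z∈A} ‖z‖. Let f : H → ℝ be Fréchet differentiable, convex, with L-Lipschitz gradient (L > 0), and μ-strongly convex (0 < μ ≤ L), i.e., f(v) ≥ f(u) + ⟪∇f(u), v − u⟫ + (μ/2)‖v − u‖² for all u, v ∈ H. Let x⋆ minimize f over the closure of span(A), let δ ∈ (0,1], and let (x_t)_{t≥0} be a sequence with x₀ ∈ span(A) such that for every t there is z_t ∈ A with ⟪∇f(x_t), z_t⟫ ≤ δ·inf_{z∈A} ⟪∇f(x_t), z⟫ (a δ-approximate matching-pursuit LMO output), and x_{t+1} = x_t − (⟪∇f(x_t),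 z_t⟫/(L‖z_t‖²))·z_t if z_t ≠ 0, and x_{t+1} = x_t if z_t = 0. Then for every t ≥ 0, the suboptimality ε_t := f(x_t) − f(x⋆) satisfies ε_{t+1} ≤ (1 − δ²·μ·mDW(A)²/(L·radius(A)²))·ε_t. -/
/-!
Write `σ_A(d) = sup_{w ∈ A} ⟪d, w⟫` for the support function of `A`, `K` for the closed span of
`A` and `p = P_K ∇f(x_t)`. By the descent lemma for `L`-smooth `f`, the step along `z_t` decreases
`f` by at least `⟪∇f(x_t), z_t⟫² / (2 L radius(A)²)`. Strong convexity on `K` gives the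
Polyak–Łojasiewicz bound `2 μ ε_t ≤ ‖p‖²`. Finally `σ_A(d) ≥ mDW(A) ‖d‖` on `span A` by
homogeneity of `σ_A`, hence on `K` by continuity, and applied to `d = -p` it turns the inexact LMO
into `⟪∇f(x_t), z_t⟫ ≤ -δ mDW(A) ‖p‖`.
-/

open scoped RealInnerProductSpace Pointwise Classical

/-- Directional width of a set `A` in direction `d`: `W_A(d) = sup_{z ∈ A} ⟪d / ‖d‖, z⟫`. -/
noncomputable def dirWidth {H : Type*} [NormedAddCommGroup H] [InnerProductSpace ℝ H]
    (A : Set H) (d : H) : ℝ :=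
  sSup ((fun z => ⟪(‖d‖)⁻¹ • d, z⟫) '' A)

/-- Minimal intrinsic directional width of `A`: the infimum of `W_A(d)` over nonzero
directions `d` in the linear span of `A`. -/
noncomputable def mDW {H : Type*} [NormedAddCommGroup H] [InnerProductSpace ℝ H]
    (A : Set H) : ℝ :=
  sInf (dirWidth A '' {d | d ∈ Submodule.span ℝ A ∧ d ≠ 0})

noncomputable def supportFun {H : Type*} [NormedAddCommGroup H] [InnerProductSpace ℝ H]
    (A : Set H) (d : H) : ℝ :=
  sSup ((fun w => ⟪d, w⟫) '' A)

theorem norm_le_sSup_norm_image {E : Type*} [SeminormedAddCommGroup E] {A : Set E}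
    (hA : Bornology.IsBounded A) {w : E} (hw : w ∈ A) :
    ‖w‖ ≤ sSup ((fun w => ‖w‖) '' A) := by
  obtain ⟨C, hC⟩ := isBounded_iff_forall_norm_le.1 hA
  exact le_csSup ⟨C, Set.forall_mem_image.2 hC⟩ ⟨w, hw, rfl⟩

section SupportFunction

variable {H : Type*} [NormedAddCommGroup H] [InnerProductSpace ℝ H] {A : Set H}

theorem bddAbove_inner_image (hA : Bornology.IsBounded A) (d : H) :
    BddAbove ((fun w => ⟪d, w⟫) '' A) := by
  obtain ⟨C, hC⟩ := isBounded_iff_forall_norm_le.1 hA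
  refine ⟨‖d‖ * C, ?_⟩
  rintro _ ⟨w, hw, rfl⟩
  exact (real_inner_le_norm d w).trans (by gcongr; exact hC w hw)

theorem supportFun_smul {c : ℝ} (hc : 0 ≤ c) (d : H) :
    supportFun A (c • d) = c * supportFun A d := by
  have : (fun w => ⟪c • d, w⟫) '' A = c • (fun w => ⟪d, w⟫) '' A := by
    simp only [real_inner_smul_left, ← Set.image_smul, Set.image_image, smul_eq_mul]
  rw [supportFun, this, Real.sSup_smul_of_nonneg hc, smul_eq_mul, supportFun]

theorem continuous_supportFun (hA : A.Nonempty) (hAbdd : Bornology.IsBounded A) :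
    Continuous (supportFun A) := by
  obtain ⟨R, -, hR⟩ := hAbdd.exists_pos_norm_le
  refine (LipschitzWith.of_le_add_mul' R fun d e => csSup_le (hA.image _) ?_).continuous
  rintro _ ⟨w, hw, rfl⟩
  calc ⟪d, w⟫ = ⟪e, w⟫ + ⟪d - e, w⟫ := by rw [← inner_add_left, add_sub_cancel]
    _ ≤ supportFun A e + R * dist d e := by
      gcongr
      · exact le_csSup (bddAbove_inner_image hAbdd e) ⟨w, hw, rfl⟩
      · rw [dist_eq_norm, mul_comm]
        exact (real_inner_le_norm _ _).trans (by gcongr; exact hR w hw)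

theorem neg_norm_le_dirWidth (hAbdd : Bornology.IsBounded A) {w : H} (hw : w ∈ A) {d : H}
    (hd : d ≠ 0) : -‖w‖ ≤ dirWidth A d := by
  have hu : ‖(‖d‖)⁻¹ • d‖ = 1 := norm_smul_inv_norm hd
  calc -‖w‖ = -(‖(‖d‖)⁻¹ • d‖ * ‖w‖) := by rw [hu, one_mul]
    _ ≤ ⟪(‖d‖)⁻¹ • d, w⟫ := neg_le_of_abs_le (abs_real_inner_le_norm _ _)
    _ ≤ dirWidth A d := le_csSup (bddAbove_inner_image hAbdd _) ⟨w, hw, rfl⟩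

theorem mDW_mul_norm_le_supportFun (hA : A.Nonempty) (hAbdd : Bornology.IsBounded A) {d : H}
    (hd : d ∈ Submodule.span ℝ A) : mDW A * ‖d‖ ≤ supportFun A d := by
  rcases eq_or_ne d 0 with rfl | hd0
  · simp [supportFun, hA.image_const]
  obtain ⟨w, hw⟩ := hA
  have hbdd : BddBelow (dirWidth A '' {e | e ∈ Submodule.span ℝ A ∧ e ≠ 0}) :=
    ⟨-‖w‖, by rintro _ ⟨e, ⟨-, he⟩, rfl⟩; exact neg_norm_le_dirWidth hAbdd hw he⟩
  have hdn : 0 < ‖d‖ := norm_pos_iff.2 hd0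
  calc mDW A * ‖d‖ ≤ dirWidth A d * ‖d‖ := by
        gcongr
        exact csInf_le hbdd ⟨d, ⟨hd, hd0⟩, rfl⟩
    _ = supportFun A d := by
        rw [show dirWidth A d = supportFun A (‖d‖⁻¹ • d) from rfl,
          supportFun_smul (inv_nonneg.2 hdn.le), mul_comm, mul_inv_cancel_left₀ hdn.ne']

theorem mDW_mul_norm_le_supportFun_of_mem_closure (hA : A.Nonempty)
    (hAbdd : Bornology.IsBounded A) {d : H}
    (hd : d ∈ closure (Submodule.span ℝ A : Set H)) : mDW A * ‖d‖ ≤ supportFun A d :=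
  closure_minimal (fun _ => mDW_mul_norm_le_supportFun hA hAbdd)
    (isClosed_le (by fun_prop) (continuous_supportFun hA hAbdd)) hd

theorem sInf_inner_image_eq_neg_supportFun (g : H) :
    sInf ((fun w => ⟪g, w⟫) '' A) = -supportFun A (-g) := by
  have : (fun w => ⟪-g, w⟫) '' A = -((fun w => ⟪g, w⟫) '' A) := by
    simp only [inner_neg_left, ← Set.image_neg_eq_neg, Set.image_image]
  rw [supportFun, this, Real.sInf_def]

end SupportFunction

section Projection

variable {H : Type*} [NormedAddCommGroup H] [InnerProductSpace ℝ H]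

theorem inner_eq_inner_starProjection (K : Submodule ℝ H) [K.HasOrthogonalProjection] (g : H)
    {v : H} (hv : v ∈ K) : ⟪g, v⟫ = ⟪K.starProjection g, v⟫ := by
  rw [K.inner_starProjection_left_eq_right, K.starProjection_eq_self_iff.2 hv]

theorem two_mul_sub_le_norm_starProjection_sq (K : Submodule ℝ H) [K.HasOrthogonalProjection]
    {f : H → ℝ} {g x y : H} {μ : ℝ} (hμ : 0 ≤ μ) (hxy : y - x ∈ K)
    (hstrong : f x + ⟪g, y - x⟫ + μ / 2 * ‖y - x‖ ^ 2 ≤ f y) :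
    2 * μ * (f x - f y) ≤ ‖K.starProjection g‖ ^ 2 := by
  set p := K.starProjection g
  have hgap : f x - f y ≤ ‖p‖ * ‖y - x‖ - μ / 2 * ‖y - x‖ ^ 2 := by
    have := neg_le_of_abs_le (abs_real_inner_le_norm p (y - x))
    rw [← inner_eq_inner_starProjection K g hxy] at this
    linarith
  nlinarith [sq_nonneg (‖p‖ - μ * ‖y - x‖)]

theorem sInf_inner_le_neg_mDW_mul_norm_starProjection [CompleteSpace H] {A : Set H}
    (hA : A.Nonempty) (hAbdd : Bornology.IsBounded A) (g : H) :
    sInf ((fun w => ⟪g, w⟫) '' A) ≤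
      -(mDW A * ‖(Submodule.span ℝ A).topologicalClosure.starProjection g‖) := by
  set K := (Submodule.span ℝ A).topologicalClosure
  set p := K.starProjection g
  have hAK : ∀ w ∈ A, w ∈ K := fun w hw =>
    (Submodule.span ℝ A).le_topologicalClosure (Submodule.subset_span hw)
  have hp : -p ∈ closure (Submodule.span ℝ A : Set H) := by
    rw [← Submodule.topologicalClosure_coe]
    exact K.neg_mem (K.starProjection_apply_mem g)
  rw [Set.image_congr fun w hw => inner_eq_inner_starProjection K g (hAK w hw),
    sInf_inner_image_eq_neg_supportFun, neg_le_neg_iff, ← norm_neg p]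
  exact mDW_mul_norm_le_supportFun_of_mem_closure hA hAbdd hp

end Projection

theorem le_add_inner_add_of_lipschitz_gradient {H : Type*} [NormedAddCommGroup H]
    [InnerProductSpace ℝ H] [CompleteSpace H] {f : H → ℝ} {f' : H → H} {L : ℝ}
    (hdiff : ∀ w, HasGradientAt f (f' w) w)
    (hLip : ∀ u v, ‖f' u - f' v‖ ≤ L * ‖u - v‖) (x u : H) :
    f (x + u) ≤ f x + ⟪f' x, u⟫ + L / 2 * ‖u‖ ^ 2 := by
  set φ : ℝ → ℝ := fun s => f (x + s • u) - (s * ⟪f' x, u⟫ + L / 2 * s ^ 2 * ‖u‖ ^ 2)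
  have hφ : ∀ s, HasDerivAt φ (⟪f' (x + s • u), u⟫ - (⟪f' x, u⟫ + L * s * ‖u‖ ^ 2)) s := by
    intro s
    have hline : HasDerivAt (fun s : ℝ => x + s • u) u s := by
      simpa using ((hasDerivAt_id s).smul_const u).const_add x
    have hf : HasDerivAt (fun s => f (x + s • u)) ⟪f' (x + s • u), u⟫ s :=
      (hdiff _).hasFDerivAt.comp_hasDerivAt s hline
    have hquad : HasDerivAt (fun s : ℝ => s * ⟪f' x, u⟫ + L / 2 * s ^ 2 * ‖u‖ ^ 2)
        (⟪f' x, u⟫ + L * s * ‖u‖ ^ 2) s :=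
      (((hasDerivAt_id s).mul_const ⟪f' x, u⟫).add
        (((hasDerivAt_pow 2 s).const_mul (L / 2)).mul_const (‖u‖ ^ 2))).congr_deriv
        (by simp only [Nat.cast_ofNat, one_mul, Nat.add_one_sub_one, pow_one]; ring)
    exact hf.sub hquad
  have hanti : AntitoneOn φ (Set.Ici 0) := by
    refine antitoneOn_of_hasDerivWithinAt_nonpos (convex_Ici 0)
      (fun s _ => (hφ s).continuousAt.continuousWithinAt)
      (fun s _ => (hφ s).hasDerivWithinAt) fun s hs => ?_
    rw [interior_Ici] at hs
    have hlip : ‖f' (x + s • u) - f' x‖ ≤ L * (s * ‖u‖) := by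
      simpa [norm_smul, abs_of_pos (Set.mem_Ioi.1 hs)] using hLip (x + s • u) x
    have hinner := real_inner_le_norm (f' (x + s • u) - f' x) u
    rw [inner_sub_left] at hinner
    nlinarith [mul_le_mul_of_nonneg_right hlip (norm_nonneg u)]
  have := hanti Set.self_mem_Ici (Set.mem_Ici.2 zero_le_one) zero_le_one
  simp only [φ, zero_smul, add_zero, one_smul, zero_mul, one_mul] at this
  linarith

noncomputable def matchingPursuitStep {H : Type*} [NormedAddCommGroup H] [InnerProductSpace ℝ H]
    (L : ℝ) (g x z : H) : H :=
  if z = 0 then x else x - (⟪g, z⟫ / (L * ‖z‖ ^ 2)) • z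

section MatchingPursuitStep

variable {H : Type*} [NormedAddCommGroup H] [InnerProductSpace ℝ H]

theorem matchingPursuitStep_mem {K : Submodule ℝ H} (L : ℝ) (g : H) {x z : H} (hx : x ∈ K)
    (hz : z ∈ K) : matchingPursuitStep L g x z ∈ K := by
  unfold matchingPursuitStep
  split_ifs
  exacts [hx, K.sub_mem hx (K.smul_mem _ hz)]

theorem le_sub_sq_div_of_matchingPursuitStep [CompleteSpace H] {f : H → ℝ} {f' : H → H}
    {L : ℝ} (hL : 0 < L) (hdiff : ∀ w, HasGradientAt f (f' w) w)
    (hLip : ∀ u v, ‖f' u - f' v‖ ≤ L * ‖u - v‖) (x : H) {z : H} {R : ℝ} (hzR : ‖z‖ ≤ R) :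
    f (matchingPursuitStep L (f' x) x z) ≤ f x - ⟪f' x, z⟫ ^ 2 / (2 * L * R ^ 2) := by
  unfold matchingPursuitStep
  split_ifs with hz
  · simp [hz]
  set a := ⟪f' x, z⟫
  calc f (x - (a / (L * ‖z‖ ^ 2)) • z)
      ≤ f x + ⟪f' x, -((a / (L * ‖z‖ ^ 2)) • z)⟫ + L / 2 * ‖-((a / (L * ‖z‖ ^ 2)) • z)‖ ^ 2 := by
        rw [sub_eq_add_neg]
        exact le_add_inner_add_of_lipschitz_gradient hdiff hLip x _
    _ = f x - a ^ 2 / (2 * L * ‖z‖ ^ 2) := by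
        rw [inner_neg_right, real_inner_smul_right, norm_neg, norm_smul, Real.norm_eq_abs, mul_pow,
          sq_abs]
        field_simp
        ring
    _ ≤ f x - a ^ 2 / (2 * L * R ^ 2) := by
        gcongr

end MatchingPursuitStep

theorem matchingPursuit_linear_convergence_general
    {H : Type*} [NormedAddCommGroup H] [InnerProductSpace ℝ H] [CompleteSpace H]
    (A : Set H) (hAbdd : Bornology.IsBounded A)
    (hmdw : 0 < mDW A)
    (L μ : ℝ) (hL : 0 < L) (hμ : 0 < μ)
    (f : H → ℝ) (f' : H → H)
    (hdiff : ∀ w : H, HasGradientAt f (f' w) w)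
    (hLip : ∀ u v : H, ‖f' u - f' v‖ ≤ L * ‖u - v‖)
    (hstrong : ∀ u v : H, f u + ⟪f' u, v - u⟫ + μ / 2 * ‖v - u‖ ^ 2 ≤ f v)
    (xstar : H)
    (hxstar : xstar ∈ closure ((Submodule.span ℝ A : Submodule ℝ H) : Set H))
    (δ : ℝ) (hδ : δ ∈ Set.Ioc (0:ℝ) 1)
    (x z : ℕ → H)
    (hx0 : x 0 ∈ Submodule.span ℝ A)
    (hzA : ∀ t, z t ∈ A)
    (hlmo : ∀ t, ⟪f' (x t), z t⟫ ≤ δ * sInf ((fun w => ⟪f' (x t), w⟫) '' A))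
    (hupd : ∀ t, x (t + 1) =
        if z t = 0 then x t else x t - (⟪f' (x t), z t⟫ / (L * ‖z t‖ ^ 2)) • z t) :
    ∀ t : ℕ, f (x (t + 1)) - f xstar ≤
      (1 - δ ^ 2 * μ * (mDW A) ^ 2 / (L * (sSup ((fun w : H => ‖w‖) '' A)) ^ 2))
        * (f (x t) - f xstar) := by
  have hspan : ∀ t, x t ∈ Submodule.span ℝ A := by
    intro t
    induction t with
    | zero => exact hx0
    | succ t ih => exact hupd t ▸ matchingPursuitStep_mem L _ ih (Submodule.subset_span (hzA t))
  intro t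
  set K := (Submodule.span ℝ A).topologicalClosure
  set R := sSup ((fun w : H => ‖w‖) '' A)
  set ε := f (x t) - f xstar
  set a := ⟪f' (x t), z t⟫
  set p := K.starProjection (f' (x t))
  set b := δ * mDW A * ‖p‖
  have hPL : 2 * μ * ε ≤ ‖p‖ ^ 2 :=
    two_mul_sub_le_norm_starProjection_sq K hμ.le
      (K.sub_mem (by rwa [← SetLike.mem_coe, Submodule.topologicalClosure_coe])
        ((Submodule.span ℝ A).le_topologicalClosure (hspan t))) (hstrong (x t) xstar)
  have hab : a ≤ -b :=
    calc a ≤ δ * sInf ((fun w => ⟪f' (x t), w⟫) '' A) := hlmo t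
      _ ≤ δ * -(mDW A * ‖p‖) := mul_le_mul_of_nonneg_left
          (sInf_inner_le_neg_mDW_mul_norm_starProjection ⟨_, hzA t⟩ hAbdd _) hδ.1.le
      _ = -b := by ring
  have hb : 0 ≤ b := mul_nonneg (mul_nonneg hδ.1.le hmdw.le) (norm_nonneg p)
  have hdescent : f (x (t + 1)) ≤ f (x t) - a ^ 2 / (2 * L * R ^ 2) :=
    hupd t ▸ le_sub_sq_div_of_matchingPursuitStep hL hdiff hLip (x t)
      (norm_le_sSup_norm_image hAbdd (hzA t))
  calc f (x (t + 1)) - f xstar ≤ ε - a ^ 2 / (2 * L * R ^ 2) := by linarith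
    _ ≤ ε - (δ * mDW A) ^ 2 * (2 * μ * ε) / (2 * L * R ^ 2) := by
      gcongr
      calc (δ * mDW A) ^ 2 * (2 * μ * ε) ≤ (δ * mDW A) ^ 2 * ‖p‖ ^ 2 := by gcongr
        _ = b ^ 2 := by ring
        _ ≤ a ^ 2 := (pow_le_pow_left₀ hb (le_neg_of_le_neg hab) 2).trans_eq (neg_sq a)
    _ = (1 - δ ^ 2 * μ * mDW A ^ 2 / (L * R ^ 2)) * ε := by ring

/-- Linear convergence of Generalized Matching Pursuit for smooth, strongly convex objectives
(Theorem 3 / `thm:linearRateMPinexact`). -/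
theorem matchingPursuit_linear_convergence
    {H : Type*} [NormedAddCommGroup H] [InnerProductSpace ℝ H] [CompleteSpace H]
    (A : Set H) (hA : A.Nonempty) (hAbdd : Bornology.IsBounded A)
    (hmdw : 0 < mDW A)
    (hrad : 0 < sSup ((fun w : H => ‖w‖) '' A))
    (L μ : ℝ) (hL : 0 < L) (hμ : 0 < μ) (hμL : μ ≤ L)
    (f : H → ℝ) (f' : H → H)
    (hconv : ConvexOn ℝ Set.univ f)
    (hdiff : ∀ w : H, HasGradientAt f (f' w) w)
    (hLip : ∀ u v : H, ‖f' u - f' v‖ ≤ L * ‖u - v‖)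
    (hstrong : ∀ u v : H, f u + ⟪f' u, v - u⟫ + μ / 2 * ‖v - u‖ ^ 2 ≤ f v)
    (xstar : H)
    (hxstar : xstar ∈ closure ((Submodule.span ℝ A : Submodule ℝ H) : Set H))
    (hmin : ∀ w ∈ closure ((Submodule.span ℝ A : Submodule ℝ H) : Set H), f xstar ≤ f w)
    (δ : ℝ) (hδ : δ ∈ Set.Ioc (0:ℝ) 1)
    (x z : ℕ → H)
    (hx0 : x 0 ∈ Submodule.span ℝ A)
    (hzA : ∀ t, z t ∈ A)
    (hlmo : ∀ t, ⟪f' (x t), z t⟫ ≤ δ * sInf ((fun w => ⟪f' (x t), w⟫) '' A))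
    (hupd : ∀ t, x (t + 1) =
        if z t = 0 then x t else x t - (⟪f' (x t), z t⟫ / (L * ‖z t‖ ^ 2)) • z t) :
    ∀ t : ℕ, f (x (t + 1)) - f xstar ≤
      (1 - δ ^ 2 * μ * (mDW A) ^ 2 / (L * (sSup ((fun w : H => ‖w‖) '' A)) ^ 2))
        * (f (x t) - f xstar) :=
  matchingPursuit_linear_convergence_general A hAbdd hmdw L μ hL hμ f f' hdiff hLip hstrong xstar
    hxstar δ hδ x z hx0 hzA hlmo hupd
end

section
/- Let H be a real Hilbert space and A ⊆ H a nonempty bounded set. Let f : H → ℝ be Fréchet differentiable, with L-Lipschitz gradient (L > 0), and μ-strongly convex (0 < μ ≤ L), i.e., f(v) ≥ f(u) + ⟪∇f(u), v − u⟫ + (μ/2)‖v − u‖² for all u, v ∈ H. Let x⋆ ∈ H be the global minimizer of f over H. Let x ∈ H with ∇f(x) ≠ 0 and let z ∈ A, z ≠ 0, attain sup_{z'∈A} ⟪−∇f(x), z'⟫ (an exact LMO output), and set x⁺ := x − (⟪∇f(x), z⟫/(L‖z‖²))·z. Then f(x⁺) − f(x⋆) ≥ (1 − (W²/‖z‖²)·((2L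 − μ)/μ))·(f(x) − f(x⋆)), where W := ⟪−∇f(x), z⟫/‖∇f(x)‖ (which equals the directional width W_A(−∇f(x)) = sup_{z'∈A} ⟪−∇f(x)/‖∇f(x)‖, z'⟫). -/
open scoped RealInnerProductSpace Pointwise

/-- Lower bound on the one-step decay of the suboptimality of Generalized Matching Pursuit
with exact LMO (Theorem 4 / `thm:lowerBoundLinearRateMPinexact`). -/
theorem matchingPursuit_one_step_lower_bound
    {H : Type*} [NormedAddCommGroup H] [InnerProductSpace ℝ H] [CompleteSpace H]
    (A : Set H) (hA : A.Nonempty) (hAbdd : Bornology.IsBounded A)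
    (L μ : ℝ) (hL : 0 < L) (hμ : 0 < μ) (hμL : μ ≤ L)
    (f : H → ℝ) (f' : H → H)
    (hdiff : ∀ w : H, HasGradientAt f (f' w) w)
    (hLip : ∀ u v : H, ‖f' u - f' v‖ ≤ L * ‖u - v‖)
    (hstrong : ∀ u v : H, f u + ⟪f' u, v - u⟫ + μ / 2 * ‖v - u‖ ^ 2 ≤ f v)
    (xstar : H) (hmin : ∀ w : H, f xstar ≤ f w)
    (x : H) (hgrad : f' x ≠ 0)
    (z : H) (hzA : z ∈ A) (hz0 : z ≠ 0)
    (hattain : ∀ w ∈ A, ⟪-f' x, w⟫ ≤ ⟪-f' x, z⟫) :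
    (1 - (⟪-f' x, z⟫ / ‖f' x‖) ^ 2 / ‖z‖ ^ 2 * ((2 * L - μ) / μ)) * (f x - f xstar)
      ≤ f (x - (⟪f' x, z⟫ / (L * ‖z‖ ^ 2)) • z) - f xstar := by
  -- gradient vanishes at the minimizer
  have h0 : f' xstar = 0 := by
    have hloc : IsLocalMin f xstar := Filter.Eventually.of_forall hmin
    have h := hloc.hasFDerivAt_eq_zero (hdiff xstar).hasFDerivAt
    have h2 : ⟪f' xstar, f' xstar⟫ = 0 := by
      have := congrArg (fun T => T (f' xstar)) h
      simpa using this
    exact inner_self_eq_zero.mp h2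
  set s : ℝ := ⟪f' x, z⟫ with hs
  set D : ℝ := f x - f xstar with hD
  have hN : (0:ℝ) < ‖z‖ ^ 2 := pow_pos (norm_pos_iff.mpr hz0) 2
  have hG : (0:ℝ) < ‖f' x‖ ^ 2 := pow_pos (norm_pos_iff.mpr hgrad) 2
  -- strong convexity at the minimizer
  have hDlb : μ / 2 * ‖x - xstar‖ ^ 2 ≤ D := by
    have h := hstrong xstar x
    rw [h0] at h
    simp only [inner_zero_left] at h
    have : ‖x - xstar‖ = ‖x - xstar‖ := rfl
    nlinarith [h]
  -- gradient norm bound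
  have hGub : ‖f' x‖ ^ 2 * μ ≤ 2 * L ^ 2 * D := by
    have h := hLip x xstar
    rw [h0, sub_zero] at h
    have h2 : ‖f' x‖ ^ 2 ≤ (L * ‖x - xstar‖) ^ 2 := by
      have := pow_le_pow_left₀ (norm_nonneg _) h 2
      simpa using this
    nlinarith [h2, hDlb, hμ]
  have hDpos : 0 < D := by nlinarith
  -- strong convexity lower bound at x for the new point
  set γ : ℝ := s / (L * ‖z‖ ^ 2) with hγ
  have key : f x - s ^ 2 / (L * ‖z‖ ^ 2) + μ * s ^ 2 / (2 * L ^ 2 * ‖z‖ ^ 2)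
      ≤ f (x - γ • z) := by
    have h := hstrong x (x - γ • z)
    have e1 : ⟪f' x, (x - γ • z) - x⟫ = -(γ * s) := by
      simp [inner_smul_right, hs]
    have e2 : ‖(x - γ • z) - x‖ ^ 2 = γ ^ 2 * ‖z‖ ^ 2 := by
      have : (x - γ • z) - x = -(γ • z) := by abel
      rw [this, norm_neg, norm_smul]
      rw [mul_pow]
      simp [sq_abs]
    rw [e1, e2] at h
    have hγ2 : γ ^ 2 * ‖z‖ ^ 2 = s ^ 2 / (L ^ 2 * ‖z‖ ^ 2) := by
      rw [hγ]; field_simp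
    have hγ1 : γ * s = s ^ 2 / (L * ‖z‖ ^ 2) := by
      rw [hγ]; field_simp
    rw [hγ2, hγ1] at h
    have e3 : μ / 2 * (s ^ 2 / (L ^ 2 * ‖z‖ ^ 2)) = μ * s ^ 2 / (2 * L ^ 2 * ‖z‖ ^ 2) := by
      ring
    linarith [h, e3]
  -- rewrite the width term
  have hW : (⟪-f' x, z⟫ / ‖f' x‖) ^ 2 = s ^ 2 / ‖f' x‖ ^ 2 := by
    rw [inner_neg_left, div_pow, hs]
    ring_nf
  rw [hW]
  have h2Lμ : (0:ℝ) < 2 * L - μ := by linarith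
  have hGne : (‖f' x‖ : ℝ) ^ 2 ≠ 0 := hG.ne'
  have hNne : (‖z‖ : ℝ) ^ 2 ≠ 0 := hN.ne'
  -- main algebraic comparison
  have hstep : s ^ 2 / (L * ‖z‖ ^ 2) - μ * s ^ 2 / (2 * L ^ 2 * ‖z‖ ^ 2)
      ≤ s ^ 2 / ‖f' x‖ ^ 2 / ‖z‖ ^ 2 * ((2 * L - μ) / μ) * D := by
    have e1 : s ^ 2 / (L * ‖z‖ ^ 2) - μ * s ^ 2 / (2 * L ^ 2 * ‖z‖ ^ 2)
        = s ^ 2 * (2 * L - μ) / (2 * L ^ 2 * ‖z‖ ^ 2) := by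
      field_simp
    have e2 : s ^ 2 / ‖f' x‖ ^ 2 / ‖z‖ ^ 2 * ((2 * L - μ) / μ) * D
        = s ^ 2 * (2 * L - μ) * D / (‖f' x‖ ^ 2 * ‖z‖ ^ 2 * μ) := by
      first
      | (field_simp; ring)
      | field_simp
    rw [e1, e2, div_le_div_iff₀ (by positivity) (by positivity)]
    have hc : 0 ≤ s ^ 2 * (2 * L - μ) * ‖z‖ ^ 2 :=
      mul_nonneg (mul_nonneg (sq_nonneg s) h2Lμ.le) hN.le
    nlinarith [mul_le_mul_of_nonneg_left hGub hc]
  have hfx : f (x - γ • z) - f xstar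
      ≥ D - (s ^ 2 / (L * ‖z‖ ^ 2) - μ * s ^ 2 / (2 * L ^ 2 * ‖z‖ ^ 2)) := by
    simp only [hD]
    linarith [key]
  have : (1 - s ^ 2 / ‖f' x‖ ^ 2 / ‖z‖ ^ 2 * ((2 * L - μ) / μ)) * D
      = D - s ^ 2 / ‖f' x‖ ^ 2 / ‖z‖ ^ 2 * ((2 * L - μ) / μ) * D := by ring
  rw [this]
  linarith
end

section
/- Let d ≥ 1, and in ℝ^d (with the standard Euclidean inner product) let A := {e₁,…,e_d} ∪ {−e₁,…,−e_d} be the set of signed standard basis vectors. Let y ∈ ℝ^d and f(x) := (1/2)‖y − x‖². Let x₀ ∈ ℝ^d be such that all coordinates of y − x₀ have the same nonzero absolute value, i.e., there is c > 0 with |y_i − (x₀)_i| = c for all i ∈ {1,…,d}. Let (x_t) be generated by matching pursuit with exact LMO and line search: for each t, z_t ∈ A attains sup_{z∈A} ⟪y − x_t, z⟫, and x_{t+1} = x_t + ⟪y − x_t, z_t⟫·z_t. Then for every t with 0 ≤ t < d, the suboptimality ε_t := f(x_t) − f(x⋆), where x⋆ = y is the minimizer of f, satisfies ε_{t+1} ≥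 (1 − 1/(d − t))·ε_t. -/
open scoped RealInnerProductSpace Pointwise

/-- Lower bound on the decay of the suboptimality of Matching Pursuit over the signed standard
basis for the least-squares objective (Corollary 2 / `Cor:lowerBoundEx`). -/
theorem matchingPursuit_L1ball_lower_bound
    {d : ℕ} (hd : 1 ≤ d)
    (A : Set (EuclideanSpace ℝ (Fin d)))
    (hA : A = (Set.range fun i : Fin d => EuclideanSpace.single i (1:ℝ)) ∪
              (Set.range fun i : Fin d => -EuclideanSpace.single i (1:ℝ)))
    (y : EuclideanSpace ℝ (Fin d))
    (f : EuclideanSpace ℝ (Fin d) → ℝ) (hf : ∀ w, f w = (1 / 2) * ‖y - w‖ ^ 2)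
    (c : ℝ) (hc : 0 < c)
    (x z : ℕ → EuclideanSpace ℝ (Fin d))
    (hx0 : ∀ i : Fin d, |y i - x 0 i| = c)
    (hzA : ∀ t, z t ∈ A)
    (hattain : ∀ t, ∀ w ∈ A, ⟪y - x t, w⟫ ≤ ⟪y - x t, z t⟫)
    (hupd : ∀ t, x (t + 1) = x t + ⟪y - x t, z t⟫ • z t) :
    ∀ t : ℕ, t < d →
      (1 - 1 / ((d : ℝ) - t)) * (f (x t) - f y) ≤ f (x (t + 1)) - f y := by
  have inner_single : ∀ (u : EuclideanSpace ℝ (Fin d)) (i : Fin d),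
      ⟪u, EuclideanSpace.single i (1:ℝ)⟫ = u i := by
    intro u i; simp [EuclideanSpace.inner_single_right]
  -- the invariant
  have key : ∀ t, t ≤ d →
      (∀ i, |(y - x t) i| = c ∨ (y - x t) i = 0) ∧
      (Finset.univ.filter (fun i => (y - x t) i ≠ 0)).card = d - t := by
    intro t
    induction t with
    | zero =>
      intro _
      have habs : ∀ i, |(y - x 0) i| = c := by
        intro i
        have := hx0 i
        simpa using this
      refine ⟨fun i => Or.inl (habs i), ?_⟩
      have heq : (Finset.univ.filter fun i => (y - x 0) i ≠ 0) = Finset.univ := by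
        ext i
        simp only [Finset.mem_filter, Finset.mem_univ, true_and, iff_true]
        intro h
        have h2 := habs i
        rw [h] at h2
        simp at h2
        exact hc.ne h2
      rw [heq]; simp
    | succ t ih =>
      intro hle
      have htd : t < d := hle
      obtain ⟨habs, hcard⟩ := ih htd.le
      set u : EuclideanSpace ℝ (Fin d) := y - x t with hu
      set M : ℝ := ⟪u, z t⟫ with hM
      -- all |u i| ≤ M
      have hle_M : ∀ i, |u i| ≤ M := by
        intro i
        have h1 : ⟪u, EuclideanSpace.single i (1:ℝ)⟫ ≤ M := by
          apply hattain t
          rw [hA]; left; exact ⟨i, rfl⟩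
        have h2 : ⟪u, -EuclideanSpace.single i (1:ℝ)⟫ ≤ M := by
          apply hattain t
          rw [hA]; right; exact ⟨i, rfl⟩
        rw [inner_single] at h1
        rw [inner_neg_right, inner_single] at h2
        exact abs_le.mpr ⟨by linarith, h1⟩
      -- some coordinate is nonzero
      have hpos : 0 < (Finset.univ.filter fun i => u i ≠ 0).card := by
        rw [hcard]; omega
      obtain ⟨i₀, hi₀mem⟩ := Finset.card_pos.mp hpos
      have hi₀ : u i₀ ≠ 0 := by
        have := Finset.mem_filter.mp hi₀mem
        exact this.2
      have hi₀c : |u i₀| = c := (habs i₀).resolve_right hi₀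
      have hMc : c ≤ M := hi₀c ▸ hle_M i₀
      -- z t = ± single j 1
      have hz := hzA t
      rw [hA] at hz
      have hform : ∃ (j : Fin d) (σ : ℝ), (σ = 1 ∨ σ = -1) ∧
          z t = σ • EuclideanSpace.single j (1:ℝ) := by
        rcases hz with ⟨j, hj⟩ | ⟨j, hj⟩
        · exact ⟨j, 1, Or.inl rfl, by rw [← hj]; simp⟩
        · exact ⟨j, -1, Or.inr rfl, by rw [← hj]; simp⟩
      obtain ⟨j, σ, hσ, hzt⟩ := hform
      have hσ2 : σ * σ = 1 := by rcases hσ with h | h <;> rw [h] <;> norm_num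
      have hMj : M = σ * u j := by
        rw [hM, hzt, inner_smul_right, inner_single]
      have hMle : M ≤ |u j| := by
        rw [hMj]
        have h1 := le_abs_self (u j)
        have h2 := neg_abs_le (u j)
        rcases hσ with h | h <;> rw [h] <;> linarith
      have hujc : |u j| = c := by
        rcases habs j with h | h
        · exact h
        · exfalso; rw [h] at hMle; simp at hMle; linarith
      have hMeq : M = c := le_antisymm (hMle.trans hujc.le) hMc
      have huj : u j ≠ 0 := by
        intro h; rw [h] at hujc; simp at hujc; exact hc.ne hujc
      -- new residual
      have hres : y - x (t + 1) = u - M • z t := by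
        rw [hupd t, hM, hu]
        abel
      have hnew : ∀ i, (y - x (t+1)) i = if i = j then 0 else u i := by
        intro i
        rw [hres]
        by_cases hij : i = j
        · subst hij
          rw [if_pos rfl]
          simp only [PiLp.sub_apply, PiLp.smul_apply, hzt, EuclideanSpace.single_apply,
            smul_eq_mul, if_pos rfl, eq_self_iff_true, if_true]
          rw [hMj]
          linear_combination (-(u i)) * hσ2
        · rw [if_neg hij]
          simp [hzt, EuclideanSpace.single_apply, hij]
      constructor
      · intro i
        rw [hnew i]
        by_cases hij : i = j
        · simp [hij]
        · rw [if_neg hij]; exact habs i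
      · have hset : (Finset.univ.filter fun i => (y - x (t+1)) i ≠ 0) =
            (Finset.univ.filter fun i => u i ≠ 0).erase j := by
          ext i
          simp only [Finset.mem_filter, Finset.mem_univ, true_and, Finset.mem_erase]
          rw [hnew i]
          by_cases hij : i = j
          · simp [hij]
          · simp [hij]
        rw [hset, Finset.card_erase_of_mem (by simp [huj]), hcard]
        omega
  -- suboptimality formula
  have hval : ∀ t, t ≤ d → f (x t) - f y = (1/2) * (d - t : ℕ) * c ^ 2 := by
    intro t ht
    obtain ⟨habs, hcard⟩ := key t ht
    have hfy : f y = 0 := by rw [hf]; simp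
    rw [hf, hfy, sub_zero]
    have hnorm : ‖y - x t‖ ^ 2 = ∑ i, ((y - x t) i) ^ 2 := by
      rw [← real_inner_self_eq_norm_sq, PiLp.inner_apply]
      simp [sq]
    rw [hnorm]
    have hsum : ∑ i, ((y - x t) i) ^ 2 =
        ∑ i ∈ Finset.univ.filter (fun i => (y - x t) i ≠ 0), c ^ 2 := by
      rw [Finset.sum_filter]
      apply Finset.sum_congr rfl
      intro i _
      rcases habs i with h | h
      · rw [← sq_abs, h]
        have h0 : (y - x t) i ≠ 0 := by
          intro h0; rw [h0] at h; simp at h; exact hc.ne h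
        rw [if_pos h0]
      · simp [h]
    rw [hsum, Finset.sum_const, hcard]
    simp [mul_comm]
    ring
  intro t htd
  rw [hval t htd.le, hval (t+1) htd]
  have h1 : (1:ℝ) ≤ (d:ℝ) - t := by
    have : (t:ℝ) + 1 ≤ d := by exact_mod_cast htd
    linarith
  have h0 : (0:ℝ) < (d:ℝ) - t := by linarith
  have hc1 : ((d - t : ℕ) : ℝ) = (d:ℝ) - t := by
    rw [Nat.cast_sub htd.le]
  have hc2 : ((d - (t+1) : ℕ) : ℝ) = (d:ℝ) - t - 1 := by
    rw [Nat.cast_sub htd]; push_cast; ring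
  rw [hc1, hc2]
  have heq : (1 - 1 / ((d:ℝ) - t)) * (1/2 * ((d:ℝ) - t) * c ^ 2) =
      1/2 * ((d:ℝ) - t - 1) * c ^ 2 := by
    field_simp
  rw [heq]
end

section
/- Let B = {s₁,…,s_n} ⊂ ℝ^d (with the standard Euclidean inner product) be a finite set of n distinct unit-norm vectors (‖s_i‖ = 1) with B ∩ (−B) = ∅, and let A := B ∪ (−B) (so A is symmetric with 2n elements). Define the cumulative coherence μ(B, m) := max over subsets I ⊆ B with |I| = m of max over s ∈ B \ I of Σ_{s'∈I} |⟪s, s'⟫|, for 0 ≤ m < n. Then μ(B, n − 1) ≥ 1 − n·mDW(A)². -/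
open scoped RealInnerProductSpace Pointwise

/-- Cumulative coherence `μ(B, m)` of a finite dictionary `B`. -/
noncomputable def cumCoherence {H : Type*} [NormedAddCommGroup H] [InnerProductSpace ℝ H]
    (B : Finset H) (m : ℕ) : ℝ :=
  sSup {x : ℝ | ∃ I ⊆ B, I.card = m ∧ ∃ s ∈ B, s ∉ I ∧ x = ∑ s' ∈ I, |⟪s, s'⟫|}

/-!
Write a unit vector `u ∈ span B` as `u = ∑ g s • s` and let `M = |g s₁|` be the largest
coefficient, `W` the width of `A = B ∪ -B` in direction `u`, and `μ = μ(B, n - 1)`.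
Pairing `u` with itself gives `1 ≤ n M W`; pairing `u` with `s₁` and isolating the
coefficient `g s₁` gives `M (1 - μ) ≤ W`. Together, `1 - μ ≤ n W²` for every direction,
hence `1 - μ ≤ n · mDW(A)²`.
-/

section

variable {H : Type*} [NormedAddCommGroup H] [InnerProductSpace ℝ H]

theorem bddAbove_cumCoherence_set (B : Finset H) (m : ℕ) :
    BddAbove {x : ℝ | ∃ I ⊆ B, I.card = m ∧ ∃ s ∈ B, s ∉ I ∧ x = ∑ s' ∈ I, |⟪s, s'⟫|} := by
  refine ⟨∑ t ∈ B, ∑ s' ∈ B, |⟪t, s'⟫|, ?_⟩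
  rintro x ⟨I, hIB, -, s, hs, -, rfl⟩
  calc ∑ s' ∈ I, |⟪s, s'⟫| ≤ ∑ s' ∈ B, |⟪s, s'⟫| :=
        Finset.sum_le_sum_of_subset_of_nonneg hIB fun _ _ _ => abs_nonneg _
    _ ≤ ∑ t ∈ B, ∑ s' ∈ B, |⟪t, s'⟫| :=
        Finset.single_le_sum (f := fun t => ∑ s' ∈ B, |⟪t, s'⟫|)
          (fun _ _ => Finset.sum_nonneg fun _ _ => abs_nonneg _) hs

theorem sum_erase_abs_inner_le_cumCoherence [DecidableEq H] {B : Finset H} {s : H} (hs : s ∈ B) :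
    ∑ s' ∈ B.erase s, |⟪s, s'⟫| ≤ cumCoherence B (B.card - 1) :=
  le_csSup (bddAbove_cumCoherence_set B _)
    ⟨B.erase s, B.erase_subset s, Finset.card_erase_of_mem hs, s, hs, B.notMem_erase s, rfl⟩

theorem abs_inner_le_dirWidth {A : Set H} (hA : A.Finite) {z : H} (hz : z ∈ A) (hnz : -z ∈ A)
    (v : H) : |⟪‖v‖⁻¹ • v, z⟫| ≤ dirWidth A v := by
  unfold dirWidth
  have hbdd := (hA.image fun z => ⟪‖v‖⁻¹ • v, z⟫).bddAbove
  have hneg := le_csSup hbdd (Set.mem_image_of_mem _ hnz)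
  rw [inner_neg_right] at hneg
  exact abs_le.mpr ⟨by linarith, le_csSup hbdd (Set.mem_image_of_mem _ hz)⟩

theorem le_sq_mDW {A : Set H} {c : ℝ} (hne : ∃ v ∈ Submodule.span ℝ A, v ≠ 0)
    (h : ∀ v ∈ Submodule.span ℝ A, v ≠ 0 → 0 ≤ dirWidth A v ∧ c ≤ dirWidth A v ^ 2) :
    c ≤ mDW A ^ 2 := by
  obtain ⟨v, hv, hv0⟩ := hne
  have hsqrt : √c ≤ mDW A := by
    refine le_csInf (Set.Nonempty.image (dirWidth A) ⟨v, hv, hv0⟩) ?_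
    rintro _ ⟨w, ⟨hw, hw0⟩, rfl⟩
    exact Real.sqrt_le_iff.mpr (h w hw hw0)
  exact (Real.sqrt_le_iff.mp hsqrt).2

theorem one_le_card_mul_mul_of_sum_smul_eq {B : Finset H} {g : H → ℝ} {u : H} (hu : ‖u‖ = 1)
    (hg : ∑ s ∈ B, g s • s = u) {M W : ℝ} (hM : ∀ s ∈ B, |g s| ≤ M)
    (hW : ∀ s ∈ B, |⟪u, s⟫| ≤ W) :
    1 ≤ B.card * (M * W) :=
  calc (1 : ℝ) = ⟪u, ∑ s ∈ B, g s • s⟫ := by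
        rw [hg, real_inner_self_eq_norm_sq, hu, one_pow]
    _ = ∑ s ∈ B, g s * ⟪u, s⟫ := by simp only [inner_sum, real_inner_smul_right]
    _ ≤ ∑ s ∈ B, |g s| * |⟪u, s⟫| :=
        Finset.sum_le_sum fun s _ => (le_abs_self _).trans_eq (abs_mul _ _)
    _ ≤ ∑ s ∈ B, M * W := Finset.sum_le_sum fun s hs =>
        mul_le_mul (hM s hs) (hW s hs) (abs_nonneg _) ((abs_nonneg _).trans (hM s hs))
    _ = B.card * (M * W) := by rw [Finset.sum_const, nsmul_eq_mul]

theorem abs_coeff_mul_one_sub_le [DecidableEq H] {B : Finset H} {g : H → ℝ} {u s₁ : H}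
    (hs₁ : s₁ ∈ B) (hunit : ‖s₁‖ = 1) (hg : ∑ s ∈ B, g s • s = u) (hmax : ∀ s ∈ B, |g s| ≤ |g s₁|)
    {μ W : ℝ} (hμ : ∑ s ∈ B.erase s₁, |⟪s₁, s⟫| ≤ μ) (hW : |⟪u, s₁⟫| ≤ W) :
    |g s₁| * (1 - μ) ≤ W := by
  set rest := ∑ s ∈ B.erase s₁, g s * ⟪s, s₁⟫
  have hexpand : ⟪u, s₁⟫ = g s₁ + rest := by
    rw [← hg, sum_inner, ← Finset.add_sum_erase B _ hs₁]
    simp only [rest, real_inner_smul_left, real_inner_self_eq_norm_sq, hunit, one_pow, mul_one]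
  have hrest : |rest| ≤ |g s₁| * μ :=
    calc |rest| ≤ ∑ s ∈ B.erase s₁, |g s| * |⟪s₁, s⟫| := by
          refine (Finset.abs_sum_le_sum_abs _ _).trans_eq (Finset.sum_congr rfl fun s _ => ?_)
          rw [abs_mul, real_inner_comm]
      _ ≤ ∑ s ∈ B.erase s₁, |g s₁| * |⟪s₁, s⟫| := Finset.sum_le_sum fun s hs =>
          mul_le_mul_of_nonneg_right (hmax s (Finset.mem_of_mem_erase hs)) (abs_nonneg _)
      _ ≤ |g s₁| * μ := by
          rw [← Finset.mul_sum]
          exact mul_le_mul_of_nonneg_left hμ (abs_nonneg _)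
  have hcoeff : |g s₁| ≤ |⟪u, s₁⟫| + |rest| := by
    rw [show g s₁ = ⟪u, s₁⟫ - rest by linarith]
    exact abs_sub _ _
  linarith

theorem one_sub_le_card_mul_sq [DecidableEq H] {B : Finset H} (hunit : ∀ s ∈ B, ‖s‖ = 1)
    {u : H} (hu : ‖u‖ = 1) (hspan : u ∈ Submodule.span ℝ (B : Set H)) {μ W : ℝ}
    (hμ : ∀ s ∈ B, ∑ s' ∈ B.erase s, |⟪s, s'⟫| ≤ μ) (hW : ∀ s ∈ B, |⟪u, s⟫| ≤ W) :
    1 - μ ≤ B.card * W ^ 2 := by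
  obtain ⟨g, -, hg⟩ := Submodule.mem_span_finset.mp hspan
  have hB : B.Nonempty := by
    rw [Finset.nonempty_iff_ne_empty]
    rintro rfl
    simp [← hg] at hu
  obtain ⟨s₁, hs₁, hmax⟩ := B.exists_max_image (fun s => |g s|) hB
  have hW0 : 0 ≤ W := (abs_nonneg _).trans (hW s₁ hs₁)
  have hself := one_le_card_mul_mul_of_sum_smul_eq hu hg hmax hW
  have hcoeff := abs_coeff_mul_one_sub_le hs₁ (hunit s₁ hs₁) hg hmax (hμ s₁ hs₁) (hW s₁ hs₁)
  rcases le_or_gt 1 μ with hμ1 | hμ1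
  · exact (sub_nonpos.mpr hμ1).trans (by positivity)
  calc 1 - μ ≤ (1 - μ) * (B.card * (|g s₁| * W)) := le_mul_of_one_le_right (by linarith) hself
    _ = B.card * W * (|g s₁| * (1 - μ)) := by ring
    _ ≤ B.card * W * W := mul_le_mul_of_nonneg_left hcoeff (by positivity)
    _ = B.card * W ^ 2 := by ring

end

theorem cumCoherence_ge_one_sub_card_mul_mDW_sq_general
    {d : ℕ} (B : Finset (EuclideanSpace ℝ (Fin d))) (n : ℕ)
    (hcard : B.card = n) (hn : 1 ≤ n)
    (hunit : ∀ s ∈ B, ‖s‖ = 1) :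
    1 - (n : ℝ) * (mDW ((B : Set (EuclideanSpace ℝ (Fin d))) ∪
        (-(B : Set (EuclideanSpace ℝ (Fin d)))))) ^ 2 ≤ cumCoherence B (n - 1) := by
  classical
  set A : Set (EuclideanSpace ℝ (Fin d)) := ↑B ∪ -↑B
  obtain ⟨s₀, hs₀⟩ := Finset.card_pos.mp (by omega : 0 < B.card)
  have hA : A.Finite := B.finite_toSet.union B.finite_toSet.neg
  have hsymm : ∀ s ∈ B, s ∈ A ∧ -s ∈ A := fun s hs => ⟨Or.inl hs, Or.inr (by simpa using hs)⟩
  have hspan : Submodule.span ℝ A = Submodule.span ℝ (B : Set _) := by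
    rw [Submodule.span_union, Submodule.span_neg, sup_idem]
  have hn0 : (0 : ℝ) < n := by exact_mod_cast hn
  have hs₀0 : s₀ ≠ 0 := ne_zero_of_norm_ne_zero (by rw [hunit s₀ hs₀]; exact one_ne_zero)
  have hsq : (1 - cumCoherence B (n - 1)) / n ≤ mDW A ^ 2 := by
    refine le_sq_mDW ⟨s₀, Submodule.subset_span (hsymm s₀ hs₀).1, hs₀0⟩ fun v hv hv0 => ⟨?_, ?_⟩
    · exact (abs_nonneg _).trans (abs_inner_le_dirWidth hA (hsymm s₀ hs₀).1 (hsymm s₀ hs₀).2 v)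
    · rw [div_le_iff₀ hn0, mul_comm, ← hcard]
      refine one_sub_le_card_mul_sq hunit (norm_smul_inv_norm hv0) ?_
        (fun s hs => sum_erase_abs_inner_le_cumCoherence hs)
        (fun s hs => abs_inner_le_dirWidth hA (hsymm s hs).1 (hsymm s hs).2 v)
      exact hspan ▸ Submodule.smul_mem _ _ hv
  rw [div_le_iff₀ hn0] at hsq
  linarith

/-- Lower bound on the cumulative coherence in terms of the minimal intrinsic directional
width (Theorem 5 / `thm:coherenceVSdw`). -/
theorem cumCoherence_ge_one_sub_card_mul_mDW_sq
    {d : ℕ} (B : Finset (EuclideanSpace ℝ (Fin d))) (n : ℕ)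
    (hcard : B.card = n) (hn : 1 ≤ n)
    (hunit : ∀ s ∈ B, ‖s‖ = 1)
    (hdisj : (B : Set (EuclideanSpace ℝ (Fin d))) ∩ (-(B : Set (EuclideanSpace ℝ (Fin d)))) = ∅) :
    1 - (n : ℝ) * (mDW ((B : Set (EuclideanSpace ℝ (Fin d))) ∪
        (-(B : Set (EuclideanSpace ℝ (Fin d)))))) ^ 2 ≤ cumCoherence B (n - 1) :=
  cumCoherence_ge_one_sub_card_mul_mDW_sq_general B n hcard hn hunit
end

section
/- Let H be a real Hilbert space, A ⊆ H a nonempty bounded set, f : H → ℝ convex and Fréchet differentiable, δ ∈ (0,1], and C > 0 a curvature bound: f(x + γ(s − x)) ≤ f(x) + γ⟪∇f(x), s − x⟫ + (γ²/2)·C for all s ∈ A, x ∈ conv(A), and γ ∈ [0,1]. Let x⋆ ∈ conv(A) satisfy f(x⋆) ≤ f(w) for all w ∈ conv(A). Let (x_t)_{t≥0} be a sequence with x₀ ∈ conv(A) such that for every t there is z_t ∈ A with ⟪∇f(x_t), z_t − x_t⟫ ≤ δ·inf_{z∈A} ⟪∇f(x_t), z − x_t⟫, and x_{t+1} = x_t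 + γ_t (z_t − x_t) where γ_t := min(1, max(0, ⟪−∇f(x_t), z_t − x_t⟫ / C)). Then for every t ≥ 0, f(x_t) − f(x⋆) ≤ 2·((1/δ)·C + ε₀)/(δ·t + 2), where ε₀ := f(x₀) − f(x⋆). -/
open scoped RealInnerProductSpace Pointwise

/-!
Convexity gives `⟪∇f(xₜ), x⋆ - xₜ⟫ ≤ f(x⋆) - f(xₜ)`, so the δ-approximate LMO output satisfies
`⟪∇f(xₜ), zₜ - xₜ⟫ ≤ -δ hₜ` for the primal gap `hₜ = f(xₜ) - f(x⋆)`. The clipped step minimises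
the curvature upper bound `γ u + γ² C / 2` over `γ ∈ [0, 1]`, hence the iterates satisfy
`hₜ₊₁ ≤ (1 - γδ) hₜ + γ² C / 2` for every `γ ∈ [0, 1]`. Choosing `γ = 2 / (δt + 2)` in this
recursion gives the rate by induction.
-/

open Set

theorem ConvexOn.add_fderiv_sub_le {E : Type*} [NormedAddCommGroup E] [NormedSpace ℝ E]
    {s : Set E} {f : E → ℝ} {f' : E →L[ℝ] ℝ} {x y : E} (hf : ConvexOn ℝ s f)
    (hx : x ∈ s) (hy : y ∈ s) (hderiv : HasFDerivAt f f' x) :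
    f x + f' (y - x) ≤ f y := by
  let ℓ : ℝ →ᵃ[ℝ] E := AffineMap.lineMap x y
  have hline : ConvexOn ℝ (ℓ ⁻¹' s) (f ∘ ℓ) := hf.comp_affineMap ℓ
  have hderiv' : HasDerivAt (f ∘ ℓ) (f' (y - x)) 0 :=
    HasFDerivAt.comp_hasDerivAt (0 : ℝ) (by simpa [ℓ] using hderiv) AffineMap.hasDerivAt_lineMap
  have hslope := hline.le_slope_of_hasDerivAt (by simpa [ℓ] using hx) (by simpa [ℓ] using hy)
    one_pos hderiv'
  simp only [slope, ℓ, Function.comp_apply, AffineMap.lineMap_apply_zero,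
    AffineMap.lineMap_apply_one, vsub_eq_sub, sub_zero, inv_one, one_smul] at hslope
  linarith

theorem ConvexOn.add_inner_sub_le {H : Type*} [NormedAddCommGroup H] [InnerProductSpace ℝ H]
    [CompleteSpace H] {s : Set H} {f : H → ℝ} {g x y : H} (hf : ConvexOn ℝ s f)
    (hx : x ∈ s) (hy : y ∈ s) (hgrad : HasGradientAt f g x) :
    f x + ⟪g, y - x⟫ ≤ f y :=
  hf.add_fderiv_sub_le hx hy (hasGradientAt_iff_hasFDerivAt.mp hgrad)

theorem ConcaveOn.sInf_image_le_of_mem_convexHull {E : Type*} [AddCommGroup E] [Module ℝ E]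
    {s A : Set E} {g : E → ℝ} {w : E} (hg : ConcaveOn ℝ s g) (hAs : A ⊆ s)
    (hbdd : BddBelow (g '' A)) (hw : w ∈ convexHull ℝ A) :
    sInf (g '' A) ≤ g w := by
  obtain ⟨y, hyA, hyw⟩ := hg.exists_le_of_mem_convexHull hAs hw
  exact (csInf_le hbdd (mem_image_of_mem g hyA)).trans hyw

theorem sInf_inner_sub_le_of_mem_convexHull {H : Type*} [NormedAddCommGroup H]
    [InnerProductSpace ℝ H] {A : Set H} (hA : Bornology.IsBounded A) (v x : H) {w : H}
    (hw : w ∈ convexHull ℝ A) :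
    sInf ((fun w => ⟪v, w - x⟫) '' A) ≤ ⟪v, w - x⟫ := by
  have hlin : (fun w => ⟪v, w - x⟫) = fun w => innerSL ℝ v w - ⟪v, x⟫ := by
    ext w; simp [inner_sub_right]
  have hconc : ConcaveOn ℝ univ (fun w => ⟪v, w - x⟫) := by
    rw [hlin]
    exact ((innerSL ℝ v).toLinearMap.concaveOn convex_univ).sub (convexOn_const _ convex_univ)
  have hbdd : BddBelow ((fun w => ⟪v, w - x⟫) '' A) := by
    rw [hlin]
    exact (((innerSL ℝ v).lipschitz.sub (LipschitzWith.const _)).isBounded_image hA).bddBelow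
  exact hconc.sInf_image_le_of_mem_convexHull (subset_univ A) hbdd hw

theorem min_one_max_zero_mul_add_sq_le {u C γ : ℝ} (hC : 0 < C) (hγ : γ ∈ Icc (0 : ℝ) 1) :
    min 1 (max 0 (-u / C)) * u + min 1 (max 0 (-u / C)) ^ 2 / 2 * C
      ≤ γ * u + γ ^ 2 / 2 * C := by
  obtain ⟨hγ0, hγ1⟩ := hγ
  rcases le_total (-u / C) 0 with h0 | h0
  · have hu : 0 ≤ u := by linarith [(div_le_iff₀ hC).mp h0]
    rw [max_eq_left h0, min_eq_right zero_le_one]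
    nlinarith
  rcases le_total (-u / C) 1 with h1 | h1
  · rw [max_eq_right h0, min_eq_right h1]
    have hval : -u / C * u + (-u / C) ^ 2 / 2 * C = -(u ^ 2) / (2 * C) := by
      field_simp; ring
    rw [hval, div_le_iff₀ (by positivity)]
    nlinarith [sq_nonneg (γ * C + u)]
  · rw [max_eq_right h0, min_eq_left h1]
    have hu : u ≤ -C := by linarith [(le_div_iff₀ hC).mp h1]
    nlinarith [mul_nonneg (sub_nonneg.mpr hγ1) (by linarith : (0:ℝ) ≤ -u - C),
      mul_nonneg hC.le (sq_nonneg (1 - γ))]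

theorem le_two_mul_div_of_forall_le_one_sub_mul_add_sq {h : ℕ → ℝ} {δ C : ℝ}
    (hδ0 : 0 < δ) (hδ1 : δ ≤ 1) (hC : 0 ≤ C) (h0 : 0 ≤ h 0)
    (hstep : ∀ t, ∀ γ ∈ Icc (0 : ℝ) 1, h (t + 1) ≤ (1 - γ * δ) * h t + γ ^ 2 / 2 * C)
    (t : ℕ) : h t ≤ 2 * ((1 / δ) * C + h 0) / (δ * t + 2) := by
  set K := (1 / δ) * C + h 0 with hK
  have hδK : δ * K = C + δ * h 0 := by rw [hK]; field_simp
  induction t with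
  | zero =>
    have : 0 ≤ 1 / δ * C := by positivity
    simp only [Nat.cast_zero, mul_zero, zero_add]
    linarith
  | succ t ih =>
    set a := δ * t + 2 with ha
    have ha2 : 2 ≤ a := le_add_of_nonneg_left (by positivity)
    have hγ : 2 / a ∈ Icc (0 : ℝ) 1 := ⟨by positivity, by rw [div_le_one (by linarith)]; linarith⟩
    have hcontr : 0 ≤ 1 - 2 / a * δ := sub_nonneg.2 (mul_le_one₀ hγ.2 hδ0.le hδ1)
    calc h (t + 1) ≤ (1 - 2 / a * δ) * h t + (2 / a) ^ 2 / 2 * C := hstep t _ hγ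
      _ ≤ (1 - 2 / a * δ) * (2 * K / a) + (2 / a) ^ 2 / 2 * C := by gcongr
      _ = 2 * (K * (a - 2 * δ) + C) / a ^ 2 := by field_simp
      _ ≤ 2 * K / (a + δ) := by
        rw [div_le_div_iff₀ (by positivity) (by positivity)]
        nlinarith [mul_nonneg hδ0.le h0]
      _ = 2 * K / (δ * ↑(t + 1) + 2) := by rw [ha]; push_cast; ring_nf

theorem inner_sub_le_mul_sub_of_approx_lmo {H : Type*} [NormedAddCommGroup H]
    [InnerProductSpace ℝ H] [CompleteSpace H] {A : Set H} (hA : Bornology.IsBounded A)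
    {f : H → ℝ} {g y z xstar : H} {δ : ℝ} (hf : ConvexOn ℝ univ f) (hgrad : HasGradientAt f g y)
    (hxstar : xstar ∈ convexHull ℝ A) (hδ : 0 ≤ δ)
    (hlmo : ⟪g, z - y⟫ ≤ δ * sInf ((fun w => ⟪g, w - y⟫) '' A)) :
    ⟪g, z - y⟫ ≤ δ * (f xstar - f y) := by
  have hsInf := sInf_inner_sub_le_of_mem_convexHull hA g y hxstar
  have hgrad_ineq := hf.add_inner_sub_le (mem_univ y) (mem_univ xstar) hgrad
  calc ⟪g, z - y⟫ ≤ δ * sInf ((fun w => ⟪g, w - y⟫) '' A) := hlmo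
    _ ≤ δ * (f xstar - f y) := by gcongr; linarith

theorem affineInvariantFrankWolfe_sublinear_convergence_general
    {H : Type*} [NormedAddCommGroup H] [InnerProductSpace ℝ H] [CompleteSpace H]
    (A : Set H) (hAbdd : Bornology.IsBounded A)
    (f : H → ℝ) (f' : H → H)
    (hconv : ConvexOn ℝ Set.univ f)
    (hdiff : ∀ w : H, HasGradientAt f (f' w) w)
    (δ : ℝ) (hδ : δ ∈ Set.Ioc (0:ℝ) 1)
    (C : ℝ) (hC : 0 < C)
    (hcurv : ∀ s ∈ A, ∀ x ∈ convexHull ℝ A, ∀ γ ∈ Set.Icc (0:ℝ) 1,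
        f (x + γ • (s - x)) ≤ f x + γ * ⟪f' x, s - x⟫ + γ ^ 2 / 2 * C)
    (xstar : H) (hxstar : xstar ∈ convexHull ℝ A)
    (hmin : ∀ w ∈ convexHull ℝ A, f xstar ≤ f w)
    (x z : ℕ → H)
    (hx0 : x 0 ∈ convexHull ℝ A)
    (hzA : ∀ t, z t ∈ A)
    (hlmo : ∀ t, ⟪f' (x t), z t - x t⟫ ≤ δ * sInf ((fun w => ⟪f' (x t), w - x t⟫) '' A))
    (hupd : ∀ t, x (t + 1) =
        x t + min 1 (max 0 (⟪-f' (x t), z t - x t⟫ / C)) • (z t - x t)) :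
    ∀ t : ℕ, f (x t) - f xstar ≤
      2 * ((1 / δ) * C + (f (x 0) - f xstar)) / (δ * t + 2) := by
  obtain ⟨hδ0, hδ1⟩ := hδ
  set step : ℕ → ℝ := fun t => min 1 (max 0 (-⟪f' (x t), z t - x t⟫ / C))
  have hstep_mem (t : ℕ) : step t ∈ Icc (0 : ℝ) 1 :=
    ⟨le_min zero_le_one (le_max_left _ _), min_le_left _ _⟩
  have hupd' (t : ℕ) : x (t + 1) = x t + step t • (z t - x t) := by rw [hupd t, inner_neg_left]
  have hmem (t : ℕ) : x t ∈ convexHull ℝ A := by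
    induction t with
    | zero => exact hx0
    | succ t ih =>
      rw [hupd' t]
      exact (convex_convexHull ℝ A).add_smul_sub_mem ih (subset_convexHull ℝ A (hzA t))
        (hstep_mem t)
  refine le_two_mul_div_of_forall_le_one_sub_mul_add_sq hδ0 hδ1 hC.le
    (sub_nonneg.2 (hmin _ hx0)) fun t γ hγ => ?_
  set u := ⟪f' (x t), z t - x t⟫
  have hgap : u ≤ δ * (f xstar - f (x t)) :=
    inner_sub_le_mul_sub_of_approx_lmo hAbdd hconv (hdiff (x t)) hxstar hδ0.le (hlmo t)
  have hdesc := hcurv (z t) (hzA t) (x t) (hmem t) (step t) (hstep_mem t)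
  rw [← hupd' t] at hdesc
  calc f (x (t + 1)) - f xstar ≤ f (x t) + step t * u + step t ^ 2 / 2 * C - f xstar := by
        linarith
    _ ≤ f (x t) + γ * u + γ ^ 2 / 2 * C - f xstar := by
        linarith [min_one_max_zero_mul_add_sq_le (u := u) hC hγ]
    _ ≤ (1 - γ * δ) * (f (x t) - f xstar) + γ ^ 2 / 2 * C := by
        nlinarith [mul_le_mul_of_nonneg_left hgap hγ.1]

/-- Sublinear convergence of the Affine Invariant Frank–Wolfe algorithm under a curvature
bound `C` (Theorem 6 / `thm:sublinearFWAffineInvariant`). -/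
theorem affineInvariantFrankWolfe_sublinear_convergence
    {H : Type*} [NormedAddCommGroup H] [InnerProductSpace ℝ H] [CompleteSpace H]
    (A : Set H) (hA : A.Nonempty) (hAbdd : Bornology.IsBounded A)
    (f : H → ℝ) (f' : H → H)
    (hconv : ConvexOn ℝ Set.univ f)
    (hdiff : ∀ w : H, HasGradientAt f (f' w) w)
    (δ : ℝ) (hδ : δ ∈ Set.Ioc (0:ℝ) 1)
    (C : ℝ) (hC : 0 < C)
    (hcurv : ∀ s ∈ A, ∀ x ∈ convexHull ℝ A, ∀ γ ∈ Set.Icc (0:ℝ) 1,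
        f (x + γ • (s - x)) ≤ f x + γ * ⟪f' x, s - x⟫ + γ ^ 2 / 2 * C)
    (xstar : H) (hxstar : xstar ∈ convexHull ℝ A)
    (hmin : ∀ w ∈ convexHull ℝ A, f xstar ≤ f w)
    (x z : ℕ → H)
    (hx0 : x 0 ∈ convexHull ℝ A)
    (hzA : ∀ t, z t ∈ A)
    (hlmo : ∀ t, ⟪f' (x t), z t - x t⟫ ≤ δ * sInf ((fun w => ⟪f' (x t), w - x t⟫) '' A))
    (hupd : ∀ t, x (t + 1) =
        x t + min 1 (max 0 (⟪-f' (x t), z t - x t⟫ / C)) • (z t - x t)) :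
    ∀ t : ℕ, f (x t) - f xstar ≤
      2 * ((1 / δ) * C + (f (x 0) - f xstar)) / (δ * t + 2) :=
  affineInvariantFrankWolfe_sublinear_convergence_general A hAbdd f f' hconv hdiff δ hδ C hC hcurv
    xstar hxstar hmin x z hx0 hzA hlmo hupd
end

section
/- Let H be a real Hilbert space, f : H → ℝ Fréchet differentiable, L > 0, x ∈ H and z ∈ H with z ≠ 0; write g := ∇f(x). Define the matching-pursuit iterate x^MP := x − (⟪g, z⟫/(L‖z‖²))·z, and for each α > 0 with α·z ≠ x define the Frank–Wolfe iterate on the scaled atom x^FW(α) := x − (⟪g, αz − x⟫/(L‖αz − x‖²))·(αz − x) if −⟪g, αz − x⟫/(L‖αz − x‖²) ≤ 1, and x^FW(α) := α·z otherwise. Then ‖x^FW(α) − x^MP‖ → 0 as α → ∞. -/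
open scoped RealInnerProductSpace Pointwise Classical

/-- The Frank–Wolfe iterate on the blown-up atom `α • z` converges to the Matching Pursuit
iterate as `α → ∞` (Theorem 9 / `thm:stepFWMPshort`). -/
theorem frankWolfe_step_tendsto_matchingPursuit_step
    {H : Type*} [NormedAddCommGroup H] [InnerProductSpace ℝ H] [CompleteSpace H]
    (f : H → ℝ) (f' : H → H)
    (hdiff : ∀ w : H, HasGradientAt f (f' w) w)
    (L : ℝ) (hL : 0 < L)
    (x : H) (z : H) (hz : z ≠ 0) :
    Filter.Tendsto
      (fun α : ℝ =>
        ‖(if -⟪f' x, α • z - x⟫ / (L * ‖α • z - x‖ ^ 2) ≤ 1 then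
            x - (⟪f' x, α • z - x⟫ / (L * ‖α • z - x‖ ^ 2)) • (α • z - x)
          else α • z)
          - (x - (⟪f' x, z⟫ / (L * ‖z‖ ^ 2)) • z)‖)
      Filter.atTop (nhds 0) := by
  set g := f' x with hg
  set d : ℝ := ⟪g, z⟫ / (L * ‖z‖ ^ 2) with hd
  have hzn : (0:ℝ) < L * ‖z‖ ^ 2 := by
    have : (0:ℝ) < ‖z‖ := norm_pos_iff.mpr hz
    positivity
  set q : ℝ → ℝ := fun α => ⟪g, z - α⁻¹ • x⟫ / (L * ‖z - α⁻¹ • x‖ ^ 2) with hqdef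
  -- z - α⁻¹ • x → z
  have hA : Filter.Tendsto (fun α : ℝ => z - α⁻¹ • x) Filter.atTop (nhds z) := by
    have h0 : Filter.Tendsto (fun α : ℝ => α⁻¹ • x) Filter.atTop (nhds ((0:ℝ) • x)) :=
      tendsto_inv_atTop_zero.smul_const x
    simpa using tendsto_const_nhds.sub h0
  -- q → d
  have hq : Filter.Tendsto q Filter.atTop (nhds d) := by
    have hc : ContinuousAt (fun u : H => ⟪g, u⟫ / (L * ‖u‖ ^ 2)) z := by
      apply ContinuousAt.div
      · exact (continuous_const.inner continuous_id).continuousAt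
      · exact (continuous_const.mul (continuous_norm.pow 2)).continuousAt
      · exact ne_of_gt hzn
    exact hc.tendsto.comp hA
  -- algebraic identities for α ≠ 0
  have keyS : ∀ α : ℝ, α ≠ 0 →
      ⟪g, α • z - x⟫ / (L * ‖α • z - x‖ ^ 2) = α⁻¹ * q α := by
    intro α hα
    have hu : α • z - x = α • (z - α⁻¹ • x) := by
      rw [smul_sub, smul_smul, mul_inv_cancel₀ hα, one_smul]
    rw [hu, real_inner_smul_right, norm_smul]
    rw [show (‖α‖ * ‖z - α⁻¹ • x‖) ^ 2 = α ^ 2 * ‖z - α⁻¹ • x‖ ^ 2 by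
      rw [mul_pow, Real.norm_eq_abs, sq_abs]]
    rw [show L * (α ^ 2 * ‖z - α⁻¹ • x‖ ^ 2) = α ^ 2 * (L * ‖z - α⁻¹ • x‖ ^ 2) by ring]
    rw [mul_div_mul_comm]
    congr 1
    rw [sq, div_mul_eq_div_div, div_self hα, one_div]
  have keyV : ∀ α : ℝ, α ≠ 0 →
      (⟪g, α • z - x⟫ / (L * ‖α • z - x‖ ^ 2)) • (α • z - x)
        = q α • (z - α⁻¹ • x) := by
    intro α hα
    have hu : α • z - x = α • (z - α⁻¹ • x) := by
      rw [smul_sub, smul_smul, mul_inv_cancel₀ hα, one_smul]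
    rw [keyS α hα, hu, smul_smul]
    congr 1
    field_simp
  -- the scalar step size tends to 0
  have hc0 : Filter.Tendsto (fun α : ℝ => ⟪g, α • z - x⟫ / (L * ‖α • z - x‖ ^ 2))
      Filter.atTop (nhds 0) := by
    have h1 : Filter.Tendsto (fun α : ℝ => α⁻¹ * q α) Filter.atTop (nhds (0 * d)) :=
      tendsto_inv_atTop_zero.mul hq
    rw [zero_mul] at h1
    refine h1.congr' ?_
    filter_upwards [Filter.eventually_gt_atTop (0:ℝ)] with α hα
    exact (keyS α (ne_of_gt hα)).symm
  -- eventually the if-branch is taken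
  have hev : ∀ᶠ α : ℝ in Filter.atTop,
      -⟪g, α • z - x⟫ / (L * ‖α • z - x‖ ^ 2) ≤ 1 := by
    have := hc0.eventually (eventually_gt_nhds (show (-1:ℝ) < 0 by norm_num))
    filter_upwards [this] with α hα
    rw [neg_div]
    linarith
  -- the limit function
  have hlim : Filter.Tendsto (fun α : ℝ => ‖d • z - q α • (z - α⁻¹ • x)‖)
      Filter.atTop (nhds 0) := by
    have : Filter.Tendsto (fun α : ℝ => d • z - q α • (z - α⁻¹ • x))
        Filter.atTop (nhds (d • z - d • z)) :=
      tendsto_const_nhds.sub (hq.smul hA)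
    rw [sub_self] at this
    simpa using this.norm
  refine hlim.congr' ?_
  filter_upwards [hev, Filter.eventually_gt_atTop (0:ℝ)] with α h1 h2
  rw [if_pos h1, keyV α (ne_of_gt h2)]
  congr 1
  abel
end

section
/- Let H be a real Hilbert space, A ⊆ H a nonempty bounded symmetric set (A = −A), f : H → ℝ convex and Fréchet differentiable, ρ > 0 and δ ∈ (0,1]. Let x, y ∈ ρ·conv(A) and let z ∈ A satisfy ⟪∇f(x), z⟫ ≤ δ·inf_{z'∈A} ⟪∇f(x), z'⟫ (a δ-approximate matching-pursuit LMO output at x). Then (2ρ/δ)·⟪−∇f(x), z⟫ ≥ f(x) − f(y). -/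
open scoped RealInnerProductSpace Pointwise

lemma grad_convex_ineq
    {H : Type*} [NormedAddCommGroup H] [InnerProductSpace ℝ H] [CompleteSpace H]
    (f : H → ℝ) (f' : H → H)
    (hconv : ConvexOn ℝ Set.univ f)
    (hdiff : ∀ w : H, HasGradientAt f (f' w) w)
    (x y : H) : f x + ⟪f' x, y - x⟫ ≤ f y := by
  set g : ℝ → ℝ := f ∘ (AffineMap.lineMap x y) with hg
  have hgconv : ConvexOn ℝ Set.univ g := by
    have := hconv.comp_affineMap (AffineMap.lineMap x y : ℝ →ᵃ[ℝ] H)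
    simpa using this
  have hline : HasDerivAt (fun t : ℝ => AffineMap.lineMap x y t) (y - x) 0 := by
    have h := ((hasDerivAt_id (0:ℝ)).smul_const (y - x)).add_const x
    rw [one_smul] at h
    refine HasDerivAt.congr_of_eventuallyEq h ?_
    filter_upwards with t
    simp only [AffineMap.lineMap_apply_module, id]
    module
  have hfd : HasFDerivAt f ((InnerProductSpace.toDual ℝ H) (f' x)) x :=
    (hdiff x).hasFDerivAt
  have hgd : HasDerivAt g ⟪f' x, y - x⟫ 0 := by
    have h0 : (AffineMap.lineMap x y : ℝ → H) 0 = x := by simp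
    have hfd' : HasFDerivAt f ((InnerProductSpace.toDual ℝ H) (f' x))
        ((fun t : ℝ => AffineMap.lineMap x y t) 0) := by simpa using hfd
    have := hfd'.comp_hasDerivAt (0:ℝ) hline
    simpa using this
  have hslope := hgconv.le_slope_of_hasDerivAt (Set.mem_univ 0) (Set.mem_univ 1)
    zero_lt_one hgd
  have hs : slope g 0 1 = f y - f x := by
    simp [slope_def_field, hg, AffineMap.lineMap_apply_module]
  rw [hs] at hslope
  linarith

/-- Duality-gap-type certificate for the δ-approximate matching-pursuit LMO over a symmetric
atom set: `(2ρ/δ)·⟪−∇f(x), z⟫ ≥ f(x) − f(y)` for all `x, y ∈ ρ·conv(A)`. -/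
theorem matchingPursuit_gap_certificate
    {H : Type*} [NormedAddCommGroup H] [InnerProductSpace ℝ H] [CompleteSpace H]
    (A : Set H) (hA : A.Nonempty) (hAbdd : Bornology.IsBounded A)
    (hsym : A = -A)
    (f : H → ℝ) (f' : H → H)
    (hconv : ConvexOn ℝ Set.univ f)
    (hdiff : ∀ w : H, HasGradientAt f (f' w) w)
    (ρ : ℝ) (hρ : 0 < ρ)
    (δ : ℝ) (hδ : δ ∈ Set.Ioc (0:ℝ) 1)
    (x y : H) (hx : x ∈ ρ • convexHull ℝ A) (hy : y ∈ ρ • convexHull ℝ A)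
    (z : H) (hzA : z ∈ A)
    (hlmo : ⟪f' x, z⟫ ≤ δ * sInf ((fun w => ⟪f' x, w⟫) '' A)) :
    f x - f y ≤ (2 * ρ / δ) * ⟪-f' x, z⟫ := by
  obtain ⟨hδ0, hδ1⟩ := hδ
  set g := f' x with hgdef
  set m : ℝ := sInf ((fun w => ⟪g, w⟫) '' A) with hm
  -- boundedness: the image is bounded below
  obtain ⟨C, hC⟩ := hAbdd.subset_closedBall 0
  have hbdd : BddBelow ((fun w => ⟪g, w⟫) '' A) := by
    refine ⟨-(‖g‖ * C), ?_⟩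
    rintro _ ⟨a, ha, rfl⟩
    have h1 : |⟪g, a⟫| ≤ ‖g‖ * ‖a‖ := abs_real_inner_le_norm g a
    have h2 : ‖a‖ ≤ C := by simpa using hC ha
    have : ‖g‖ * ‖a‖ ≤ ‖g‖ * C := by
      exact mul_le_mul_of_nonneg_left h2 (norm_nonneg g)
    have := (abs_le.mp (h1.trans this)).1
    linarith
  -- m is a lower bound on inner products over A, hence over conv A
  have hlow : ∀ u ∈ convexHull ℝ A, m ≤ ⟪g, u⟫ := by
    intro u hu
    have hsub : A ⊆ {w | m ≤ ⟪g, w⟫} := fun a ha =>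
      csInf_le hbdd ⟨a, ha, rfl⟩
    have hcvx : Convex ℝ {w : H | m ≤ ⟪g, w⟫} := convex_halfSpace_ge
      (⟨⟨⟨fun w => ⟪g, w⟫, fun a b => inner_add_right g a b⟩,
        fun c w => real_inner_smul_right g w c⟩, continuous_const.inner continuous_id⟩ :
        H →L[ℝ] ℝ).toLinearMap.isLinear m
    exact convexHull_min hsub hcvx hu
  have hupp : ∀ u ∈ convexHull ℝ A, ⟪g, u⟫ ≤ -m := by
    intro u hu
    have hsub : A ⊆ {w | ⟪g, w⟫ ≤ -m} := by
      intro a ha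
      have hna : -a ∈ A := by rw [hsym]; exact Set.neg_mem_neg.mpr ha
      have := csInf_le hbdd ⟨-a, hna, rfl⟩
      simp only [inner_neg_right] at this
      simp only [Set.mem_setOf_eq]
      linarith
    have hcvx : Convex ℝ {w : H | ⟪g, w⟫ ≤ -m} := convex_halfSpace_le
      (⟨⟨⟨fun w => ⟪g, w⟫, fun a b => inner_add_right g a b⟩,
        fun c w => real_inner_smul_right g w c⟩, continuous_const.inner continuous_id⟩ :
        H →L[ℝ] ℝ).toLinearMap.isLinear (-m)
    exact convexHull_min hsub hcvx hu
  -- m ≤ 0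
  obtain ⟨a0, ha0⟩ := hA
  have hm0 : m ≤ 0 := by
    have h1 : m ≤ ⟪g, a0⟫ := csInf_le hbdd ⟨a0, ha0, rfl⟩
    have hna : -a0 ∈ A := by rw [hsym]; exact Set.neg_mem_neg.mpr ha0
    have h2 : m ≤ -⟪g, a0⟫ := by
      have := csInf_le hbdd ⟨-a0, hna, rfl⟩
      simpa [inner_neg_right] using this
    linarith
  -- decompose x and y
  obtain ⟨u, hu, rfl⟩ := hx
  obtain ⟨v, hv, rfl⟩ := hy
  -- gradient inequality
  have hgrad := grad_convex_ineq f f' hconv hdiff (ρ • u) (ρ • v)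
  have hinner : ⟪g, ρ • v - ρ • u⟫ = ρ * ⟪g, v⟫ - ρ * ⟪g, u⟫ := by
    rw [inner_sub_right, real_inner_smul_right, real_inner_smul_right]
  rw [hinner] at hgrad
  have h1 : m ≤ ⟪g, v⟫ := hlow v hv
  have h2 : ⟪g, u⟫ ≤ -m := hupp u hu
  -- f x - f y ≤ ρ⟪g,u⟫ - ρ⟪g,v⟫ ≤ -2ρm
  have hkey : f (ρ • u) - f (ρ • v) ≤ -(2 * ρ * m) := by
    nlinarith
  have hfinal : -(2 * ρ * m) ≤ (2 * ρ / δ) * ⟪-g, z⟫ := by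
    rw [inner_neg_left]
    have hz : -⟪g, z⟫ ≥ -(δ * m) := by linarith
    have hcoef : 0 ≤ 2 * ρ / δ := by positivity
    have := mul_le_mul_of_nonneg_left hz hcoef
    calc -(2 * ρ * m) = (2 * ρ / δ) * (-(δ * m)) := by field_simp
    _ ≤ (2 * ρ / δ) * (-⟪g, z⟫) := this
  linarith
end

section
/- Let H be a real Hilbert space, A ⊆ H a nonempty bounded set, f : H → ℝ convex and Fréchet differentiable, and δ ∈ (0,1]. Let x⋆ ∈ conv(A) satisfy f(x⋆) ≤ f(w) for all w ∈ conv(A). Then for any x ∈ H and any z ∈ A with ⟪∇f(x), z − x⟫ ≤ δ·inf_{z'∈A} ⟪∇f(x), z' − x⟫ (a δ-approximate Frank–Wolfe LMO output at x), one has ⟪−∇f(x), z − x⟫ ≥ δ·(f(x) − f(x⋆)); that is, the (approximate) Frank–Wolfe duality gap certifies the suboptimality. -/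
open scoped RealInnerProductSpace
open Set

/-!
The linear model `w ↦ ⟪∇f(x), w - x⟫` is affine, so its infimum over `A` equals its infimum over
`conv(A)` and in particular lies below its value at `x⋆`; by convexity that value is at most
`f(x⋆) - f(x)`. Hence `f(x) - f(x⋆) ≤ -inf_A ⟪∇f(x), · - x⟫`, and the `δ`-approximate LMO output
recovers a `δ`-fraction of this.
-/

theorem ConvexOn.le_sub_of_hasFDerivAt {E : Type*} [NormedAddCommGroup E] [NormedSpace ℝ E]
    {s : Set E} {f : E → ℝ} {f' : E →L[ℝ] ℝ} {x y : E} (hf : ConvexOn ℝ s f)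
    (hx : x ∈ s) (hy : y ∈ s) (hd : HasFDerivAt f f' x) :
    f' (y - x) ≤ f y - f x := by
  have hline : ConvexOn ℝ (Icc (0 : ℝ) 1) (f ∘ AffineMap.lineMap x y) :=
    (hf.comp_affineMap _).subset (fun t ht => hf.1.lineMap_mem hx hy ht) (convex_Icc 0 1)
  have hder : HasDerivAt (f ∘ AffineMap.lineMap x y) (f' (y - x)) (0 : ℝ) := by
    rw [← AffineMap.lineMap_apply_zero x y (k := ℝ)] at hd
    exact hd.comp_hasDerivAt (0 : ℝ) AffineMap.hasDerivAt_lineMap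
  simpa [slope_def_field] using
    hline.le_slope_of_hasDerivAt (by simp) (by simp) one_pos hder

theorem ConvexOn.inner_le_sub_of_hasGradientAt {H : Type*} [NormedAddCommGroup H]
    [InnerProductSpace ℝ H] [CompleteSpace H] {s : Set H} {f : H → ℝ} {g x y : H}
    (hf : ConvexOn ℝ s f) (hx : x ∈ s) (hy : y ∈ s) (hd : HasGradientAt f g x) :
    ⟪g, y - x⟫ ≤ f y - f x := by
  simpa using hf.le_sub_of_hasFDerivAt hx hy hd.hasFDerivAt

theorem ConcaveOn.csInf_image_le_of_mem_convexHull_s17 {E : Type*} [AddCommGroup E] [Module ℝ E]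
    {A : Set E} {φ : E → ℝ} {w : E} (hφ : ConcaveOn ℝ (convexHull ℝ A) φ)
    (hbdd : BddBelow (φ '' A)) (hw : w ∈ convexHull ℝ A) : sInf (φ '' A) ≤ φ w := by
  obtain ⟨a, ha, hle⟩ := hφ.exists_le_of_mem_convexHull (subset_convexHull ℝ A) hw
  exact (csInf_le hbdd (mem_image_of_mem φ ha)).trans hle

theorem frankWolfe_gap_certifies_suboptimality_general
    {H : Type*} [NormedAddCommGroup H] [InnerProductSpace ℝ H] [CompleteSpace H]
    (A : Set H) (hAbdd : Bornology.IsBounded A)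
    (f : H → ℝ) (f' : H → H)
    (hconv : ConvexOn ℝ Set.univ f)
    (hdiff : ∀ w : H, HasGradientAt f (f' w) w)
    (δ : ℝ) (hδ : δ ∈ Set.Ioc (0:ℝ) 1)
    (xstar : H) (hxstar : xstar ∈ convexHull ℝ A)
    (x : H) (z : H)
    (hlmo : ⟪f' x, z - x⟫ ≤ δ * sInf ((fun w => ⟪f' x, w - x⟫) '' A)) :
    δ * (f x - f xstar) ≤ ⟪-f' x, z - x⟫ := by
  set φ : H → ℝ := fun w => ⟪f' x, w - x⟫ with hφ
  have hφ_concave : ConcaveOn ℝ (convexHull ℝ A) φ := by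
    simp_rw [hφ, inner_sub_right]
    exact ((innerₛₗ ℝ (f' x)).concaveOn (convex_convexHull ℝ A)).sub
      (convexOn_const _ (convex_convexHull ℝ A))
  have hφ_bdd : BddBelow (φ '' A) := by
    simp_rw [hφ, inner_sub_right]
    exact (((innerSL ℝ (f' x)).lipschitz.sub (LipschitzWith.const _)).isBounded_image
      hAbdd).bddBelow
  have hinf : sInf (φ '' A) ≤ φ xstar :=
    hφ_concave.csInf_image_le_of_mem_convexHull_s17 hφ_bdd hxstar
  have hfirst : φ xstar ≤ f xstar - f x :=
    hconv.inner_le_sub_of_hasGradientAt (mem_univ x) (mem_univ xstar) (hdiff x)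
  calc δ * (f x - f xstar) ≤ δ * -sInf (φ '' A) :=
        mul_le_mul_of_nonneg_left (by linarith) hδ.1.le
    _ ≤ -⟪f' x, z - x⟫ := by linarith
    _ = ⟪-f' x, z - x⟫ := (inner_neg_left _ _).symm

/-- The δ-approximate Frank–Wolfe duality gap certifies the suboptimality:
`⟪−∇f(x), z − x⟫ ≥ δ·(f(x) − f(x⋆))`. -/
theorem frankWolfe_gap_certifies_suboptimality
    {H : Type*} [NormedAddCommGroup H] [InnerProductSpace ℝ H] [CompleteSpace H]
    (A : Set H) (hA : A.Nonempty) (hAbdd : Bornology.IsBounded A)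
    (f : H → ℝ) (f' : H → H)
    (hconv : ConvexOn ℝ Set.univ f)
    (hdiff : ∀ w : H, HasGradientAt f (f' w) w)
    (δ : ℝ) (hδ : δ ∈ Set.Ioc (0:ℝ) 1)
    (xstar : H) (hxstar : xstar ∈ convexHull ℝ A)
    (hmin : ∀ w ∈ convexHull ℝ A, f xstar ≤ f w)
    (x : H) (z : H) (hzA : z ∈ A)
    (hlmo : ⟪f' x, z - x⟫ ≤ δ * sInf ((fun w => ⟪f' x, w - x⟫) '' A)) :
    δ * (f x - f xstar) ≤ ⟪-f' x, z - x⟫ :=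
  frankWolfe_gap_certifies_suboptimality_general A hAbdd f f' hconv hdiff δ hδ xstar hxstar x z hlmo
end
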